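/- arXiv:2210.12576 — 3 statements merged into one kernel-verified Lean document; each statement's English description precedes it below -/
import Mathlib

section
/- Let D be a positive nonsquare integer and let (x₁, y₁) be a solution in positive integers of the Pell equation x² − D y² = 1 (respectively of x² − D y² = −1). If every prime divisor of y₁ divides D, then (x₁, y₁) is the fundamental solution of that equation, i.e. x₁ + y₁√D is minimal among all positive integer solutions of the same equation. -/
set_option maxHeartbeats 1000000

namespace StormerAux

open Zsqrtd

noncomputable def rt (D : ℤ) : ℝ := Real.sqrt (D : ℝ)

noncomputable def v {D : ℤ} (h : 0 ≤ D) : ℤ√D →+* ℝ :=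
  Zsqrtd.lift ⟨rt D, Real.mul_self_sqrt (by exact_mod_cast h)⟩

variable {D : ℤ}

lemma v_apply (h : 0 ≤ D) (z : ℤ√D) : v h z = (z.re : ℝ) + (z.im : ℝ) * rt D := rfl

/-- Solutions: both components at least 1 and norm ±1. -/
def Sol (z : ℤ√D) : Prop := 1 ≤ z.re ∧ 1 ≤ z.im ∧ (z.norm = 1 ∨ z.norm = -1)

lemma hD0 (hD2 : 2 ≤ D) : (0:ℤ) ≤ D := by omega

lemma rt_pos (hD2 : 2 ≤ D) : 0 < rt D :=
  Real.sqrt_pos.mpr (by exact_mod_cast (by omega : (0:ℤ) < D))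

lemma rt_gt_one (hD2 : 2 ≤ D) : 1 < rt D := by
  have : (1:ℝ) < (D:ℝ) := by exact_mod_cast (by omega : (1:ℤ) < D)
  unfold rt
  nlinarith [Real.sq_sqrt (by linarith : (0:ℝ) ≤ (D:ℝ)), Real.sqrt_nonneg (D:ℝ)]

lemma sol_val_ge (hD2 : 2 ≤ D) {z : ℤ√D} (hz : Sol z) : 1 + rt D ≤ v (hD0 hD2) z := by
  rw [v_apply]
  have h1 : (1:ℝ) ≤ (z.re : ℝ) := by exact_mod_cast hz.1
  have h2 : (1:ℝ) ≤ (z.im : ℝ) := by exact_mod_cast hz.2.1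
  nlinarith [rt_pos hD2]

lemma sol_val_gt_one (hD2 : 2 ≤ D) {z : ℤ√D} (hz : Sol z) : 1 < v (hD0 hD2) z :=
  lt_of_lt_of_le (by nlinarith [rt_pos hD2]) (sol_val_ge hD2 hz)

lemma v_mul_v_star (hD2 : 2 ≤ D) (z : ℤ√D) :
    v (hD0 hD2) z * v (hD0 hD2) (star z) = (z.norm : ℝ) := by
  have h := congrArg (v (hD0 hD2)) (Zsqrtd.norm_eq_mul_conj z)
  rw [map_mul, map_intCast] at h
  exact h.symm

lemma recog (hD2 : 2 ≤ D) {z : ℤ√D} (hn : z.norm = 1 ∨ z.norm = -1)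
    (hv : 1 < v (hD0 hD2) z) : Sol z := by
  have hvs := v_mul_v_star hD2 z
  have hvpos : 0 < v (hD0 hD2) z := lt_trans one_pos hv
  have habs : -1 < v (hD0 hD2) (star z) ∧ v (hD0 hD2) (star z) < 1 := by
    rcases hn with hn | hn <;> rw [hn] at hvs <;> constructor <;> push_cast at hvs <;> nlinarith
  rw [v_apply] at hv
  rw [v_apply, Zsqrtd.re_star, Zsqrtd.im_star] at habs
  push_cast at habs
  have h1 : (0:ℤ) < z.re := by
    have : (0:ℝ) < (z.re:ℝ) := by nlinarith [habs.1, habs.2]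
    exact_mod_cast this
  have h2 : (0:ℤ) < z.im := by
    have him : (0:ℝ) < 2 * ((z.im : ℝ) * rt D) := by nlinarith [habs.1, habs.2]
    have : (0:ℝ) < (z.im : ℝ) := by nlinarith [rt_pos hD2]
    exact_mod_cast this
  exact ⟨h1, h2, hn⟩

lemma val_eq_one (hD2 : 2 ≤ D) {z : ℤ√D} (hn : z.norm = 1 ∨ z.norm = -1)
    (hv : v (hD0 hD2) z = 1) : z = 1 := by
  have hvs := v_mul_v_star hD2 z
  rw [hv, one_mul] at hvs
  rw [v_apply] at hv
  rw [v_apply, Zsqrtd.re_star, Zsqrtd.im_star] at hvs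
  push_cast at hvs
  rcases hn with hn | hn <;> rw [hn] at hvs <;> push_cast at hvs
  · have him : (z.im : ℝ) = 0 := by nlinarith [rt_pos hD2]
    have him' : z.im = 0 := by exact_mod_cast him
    have hre : (z.re : ℝ) = 1 := by rw [him] at hv; linarith
    have hre' : z.re = 1 := by exact_mod_cast hre
    ext <;> simp [him', hre']
  · have hre : (z.re : ℝ) = 0 := by linarith
    have hre' : z.re = 0 := by exact_mod_cast hre
    rw [Zsqrtd.norm_def, hre'] at hn
    simp at hn
    exfalso
    rcases eq_or_ne z.im 0 with h | h
    · rw [h] at hn; omega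
    · have : 1 ≤ z.im * z.im := by
        rcases lt_or_gt_of_ne h with h' | h' <;> nlinarith
      nlinarith

lemma sol_mul (hD2 : 2 ≤ D) {z w : ℤ√D} (hz : Sol z) (hw : Sol w) : Sol (z * w) := by
  obtain ⟨hz1, hz2, hz3⟩ := hz
  obtain ⟨hw1, hw2, hw3⟩ := hw
  have p1 : (1:ℤ) ≤ z.re * w.re := by nlinarith
  have p2 : (1:ℤ) ≤ z.im * w.im := by nlinarith
  have p4 : (1:ℤ) ≤ z.re * w.im := by nlinarith
  have p5 : (1:ℤ) ≤ z.im * w.re := by nlinarith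
  have p3 : 2*1 ≤ D * (z.im * w.im) := mul_le_mul hD2 p2 one_pos.le (by omega)
  refine ⟨?_, ?_, ?_⟩
  · rw [Zsqrtd.re_mul]; nlinarith
  · rw [Zsqrtd.im_mul]; nlinarith
  · rw [Zsqrtd.norm_mul]
    rcases hz3 with h | h <;> rcases hw3 with h' | h' <;> rw [h, h'] <;> norm_num

lemma sol_pow (hD2 : 2 ≤ D) {z : ℤ√D} (hz : Sol z) : ∀ n : ℕ, 1 ≤ n → Sol (z ^ n) := by
  intro n hn
  induction n with
  | zero => omega
  | succ k ih =>
    rcases Nat.eq_or_lt_of_le hn with h | h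
    · rw [← h]; simpa using hz
    · have hk : 1 ≤ k := by omega
      rw [pow_succ]
      exact sol_mul hD2 (ih hk) hz


lemma norm_sq_one {z : ℤ√D} (h : z.norm = 1 ∨ z.norm = -1) :
    ((z.norm : ℤ√D)) * ((z.norm : ℤ√D)) = 1 := by
  rcases h with h | h <;> rw [h] <;> norm_num

/-- Division of solutions. -/
lemma sol_div (hD2 : 2 ≤ D) {z w : ℤ√D} (hz : Sol z) (hw : Sol w)
    (hlt : v (hD0 hD2) w < v (hD0 hD2) z) :
    ∃ u : ℤ√D, Sol u ∧ u * w = z := by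
  set u := z * star w * (w.norm : ℤ√D) with hu
  have huw : u * w = z := by
    have : u * w = z * (w * star w) * ((w.norm : ℤ√D) ) := by rw [hu]; ring
    rw [this, ← Zsqrtd.norm_eq_mul_conj]
    calc z * (w.norm : ℤ√D) * (w.norm : ℤ√D) = z * ((w.norm : ℤ√D) * (w.norm : ℤ√D)) := by ring
    _ = z := by rw [norm_sq_one hw.2.2, mul_one]
  have hnu : u.norm = 1 ∨ u.norm = -1 := by
    rw [hu, Zsqrtd.norm_mul, Zsqrtd.norm_mul, Zsqrtd.norm_conj, Zsqrtd.norm_intCast]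
    rcases hz.2.2 with h | h <;> rcases hw.2.2 with h' | h' <;> rw [h, h'] <;> norm_num
  have hv : v (hD0 hD2) u * v (hD0 hD2) w = v (hD0 hD2) z := by
    rw [← map_mul, huw]
  have hwpos : 0 < v (hD0 hD2) w := lt_trans one_pos (sol_val_gt_one hD2 hw)
  have h1 : 1 < v (hD0 hD2) u := by
    rcases le_or_gt (v (hD0 hD2) u) 1 with h | h
    · exfalso
      have : v (hD0 hD2) u * v (hD0 hD2) w ≤ 1 * v (hD0 hD2) w :=
        mul_le_mul_of_nonneg_right h hwpos.le
      rw [hv, one_mul] at this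
      linarith
    · exact h
  exact ⟨u, recog hD2 hnu h1, huw⟩

lemma val_inj (hD2 : 2 ≤ D) {z w : ℤ√D} (hz : Sol z) (hw : Sol w)
    (hvv : v (hD0 hD2) z = v (hD0 hD2) w) : z = w := by
  set u := z * star w * (w.norm : ℤ√D) with hu
  have huw : u * w = z := by
    have : u * w = z * (w * star w) * ((w.norm : ℤ√D) ) := by rw [hu]; ring
    rw [this, ← Zsqrtd.norm_eq_mul_conj]
    calc z * (w.norm : ℤ√D) * (w.norm : ℤ√D) = z * ((w.norm : ℤ√D) * (w.norm : ℤ√D)) := by ring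
    _ = z := by rw [norm_sq_one hw.2.2, mul_one]
  have hnu : u.norm = 1 ∨ u.norm = -1 := by
    rw [hu, Zsqrtd.norm_mul, Zsqrtd.norm_mul, Zsqrtd.norm_conj, Zsqrtd.norm_intCast]
    rcases hz.2.2 with h | h <;> rcases hw.2.2 with h' | h' <;> rw [h, h'] <;> norm_num
  have hv : v (hD0 hD2) u * v (hD0 hD2) w = v (hD0 hD2) z := by
    rw [← map_mul, huw]
  have hwpos : 0 < v (hD0 hD2) w := lt_trans one_pos (sol_val_gt_one hD2 hw)
  have h1 : v (hD0 hD2) u = 1 := by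
    have h2 : v (hD0 hD2) u * v (hD0 hD2) w = 1 * v (hD0 hD2) w := by rw [hv, hvv, one_mul]
    exact mul_right_cancel₀ (ne_of_gt hwpos) h2
  have := val_eq_one hD2 hnu h1
  rw [this, one_mul] at huw
  exact huw.symm

/-- existence of a minimal solution. -/
lemma exists_min (hD2 : 2 ≤ D) (hne : ∃ z : ℤ√D, Sol z) :
    ∃ μ : ℤ√D, Sol μ ∧ ∀ z : ℤ√D, Sol z → v (hD0 hD2) μ ≤ v (hD0 hD2) z := by
  obtain ⟨z₀, hz₀⟩ := hne
  set T : Set ℕ := {k : ℕ | ∃ z : ℤ√D, Sol z ∧ z.im = (k : ℤ)} with hT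
  have hTne : T.Nonempty := ⟨z₀.im.toNat, z₀, hz₀, (Int.toNat_of_nonneg (by linarith [hz₀.2.1])).symm⟩
  set k₀ := sInf T with hk₀
  have hk₀T : k₀ ∈ T := Nat.sInf_mem hTne
  set R : Set ℕ := {r : ℕ | ∃ z : ℤ√D, Sol z ∧ z.im = (k₀ : ℤ) ∧ z.re = (r : ℤ)} with hR
  have hRne : R.Nonempty := by
    obtain ⟨z, hz, hzim⟩ := hk₀T
    exact ⟨z.re.toNat, z, hz, hzim, (Int.toNat_of_nonneg (by linarith [hz.1])).symm⟩
  obtain ⟨μ, hμ, hμim, hμre⟩ := Nat.sInf_mem hRne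
  refine ⟨μ, hμ, ?_⟩
  intro z hz
  have hzT : z.im.toNat ∈ T := ⟨z, hz, (Int.toNat_of_nonneg (by linarith [hz.2.1])).symm⟩
  have him : (k₀ : ℤ) ≤ z.im := by
    have := Nat.sInf_le hzT
    have h2 : ((z.im.toNat : ℕ) : ℤ) = z.im := Int.toNat_of_nonneg (by linarith [hz.2.1])
    omega
  rcases eq_or_lt_of_le him with heq | hlt
  · -- same im, compare re
    have hzR : z.re.toNat ∈ R := ⟨z, hz, heq.symm, (Int.toNat_of_nonneg (by linarith [hz.1])).symm⟩
    have hre : μ.re ≤ z.re := by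
      have := Nat.sInf_le hzR
      have h2 : ((z.re.toNat : ℕ) : ℤ) = z.re := Int.toNat_of_nonneg (by linarith [hz.1])
      omega
    rw [v_apply, v_apply, hμim, ← heq]
    have : (μ.re : ℝ) ≤ (z.re : ℝ) := by exact_mod_cast hre
    linarith
  · -- larger im: re also larger
    have hn1 : μ.re * μ.re ≤ D * (μ.im * μ.im) + 1 := by
      have := hμ.2.2
      rw [Zsqrtd.norm_def] at this
      rcases this with h | h <;> nlinarith
    have hn2 : D * (z.im * z.im) - 1 ≤ z.re * z.re := by
      have := hz.2.2
      rw [Zsqrtd.norm_def] at this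
      rcases this with h | h <;> nlinarith
    have him1 : μ.im + 1 ≤ z.im := by rw [hμim]; omega
    have him2 : (μ.im+1)*(μ.im+1) ≤ z.im*z.im := by nlinarith [hμ.2.1]
    have hd : D*((μ.im+1)*(μ.im+1)) ≤ D*(z.im*z.im) := mul_le_mul_of_nonneg_left him2 (by omega)
    have hkey : μ.re*μ.re < z.re*z.re := by
      nlinarith [hd, hn1, hn2, mul_le_mul hD2 (by linarith [hμ.2.1] : (3:ℤ) ≤ 2*μ.im+1) (by norm_num) (by omega)]
    have hre : μ.re ≤ z.re := by nlinarith [hkey, hμ.1, hz.1]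
    rw [v_apply, v_apply]
    have h1 : (μ.re : ℝ) ≤ (z.re : ℝ) := by exact_mod_cast hre
    have h2 : (μ.im : ℝ) ≤ (z.im : ℝ) := by
      have : μ.im ≤ z.im := by omega
      exact_mod_cast this
    nlinarith [rt_pos hD2]

/-- every solution is a power of the minimal one. -/
lemma eq_pow (hD2 : 2 ≤ D) {μ : ℤ√D} (hμ : Sol μ)
    (hmin : ∀ z : ℤ√D, Sol z → v (hD0 hD2) μ ≤ v (hD0 hD2) z) :
    ∀ z : ℤ√D, Sol z → ∃ n : ℕ, 1 ≤ n ∧ z = μ ^ n := by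
  suffices H : ∀ N : ℕ, ∀ z : ℤ√D, Sol z → z.im.toNat ≤ N → ∃ n : ℕ, 1 ≤ n ∧ z = μ ^ n by
    intro z hz; exact H z.im.toNat z hz le_rfl
  intro N
  induction N with
  | zero =>
    intro z hz hle
    exfalso
    have := hz.2.1
    omega
  | succ N ih =>
    intro z hz hle
    rcases eq_or_lt_of_le (hmin z hz) with heq | hlt
    · exact ⟨1, le_rfl, by rw [pow_one]; exact val_inj hD2 hz hμ heq.symm⟩
    · obtain ⟨u, hu, huw⟩ := sol_div hD2 hz hμ hlt
      have him : u.im + 1 ≤ z.im := by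
        have : z.im = u.re * μ.im + u.im * μ.re := by rw [← huw, Zsqrtd.im_mul]
        nlinarith [hu.1, hu.2.1, hμ.1, hμ.2.1]
      have hult : u.im.toNat ≤ N := by
        have := hz.2.1; have := hu.2.1; omega
      obtain ⟨n, hn1, hn2⟩ := ih u hu hult
      exact ⟨n + 1, by omega, by rw [pow_succ, ← hn2, huw]⟩


lemma pow_decomp (hD2 : 2 ≤ D) {γ : ℤ√D} (ha : 0 ≤ γ.re) (hb : 0 ≤ γ.im) :
    ∀ k : ℕ, 1 ≤ k → ∃ t M : ℤ, 0 ≤ t ∧ 0 ≤ M ∧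
      (γ^k).re = γ.re^k + D*γ.im^2*t ∧
      (γ^k).im = (k:ℤ)*γ.re^(k-1)*γ.im + D*γ.im^3*M := by
  intro k hk
  induction k, hk using Nat.le_induction with
  | base => exact ⟨0, 0, le_rfl, le_rfl, by simp, by simp⟩
  | succ k hk ih =>
    obtain ⟨t, M, ht, hM, hre, him⟩ := ih
    have hpow : γ.re^(k-1) * γ.re = γ.re^k := by
      rw [← pow_succ, Nat.sub_add_cancel hk]
    refine ⟨t*γ.re + (k:ℤ)*γ.re^(k-1) + D*γ.im^2*M, t + M*γ.re, ?_, ?_, ?_, ?_⟩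
    · have h1 : 0 ≤ t*γ.re := mul_nonneg ht ha
      have h2 : 0 ≤ (k:ℤ)*γ.re^(k-1) := mul_nonneg (by positivity) (pow_nonneg ha _)
      have h3 : 0 ≤ D*γ.im^2*M := mul_nonneg (mul_nonneg (by omega) (sq_nonneg _)) hM
      linarith
    · have h1 : 0 ≤ M*γ.re := mul_nonneg hM ha
      linarith
    · rw [pow_succ, Zsqrtd.re_mul, hre, him]
      push_cast
      ring
    · rw [pow_succ, Zsqrtd.im_mul, hre, him]
      have h5 : (k+1) - 1 = k := by omega
      rw [h5]
      push_cast
      linear_combination (k:ℤ) * γ.im * hpow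

lemma pow_congr {γ : ℤ√D} (q dd : ℤ) (hqd : D = q * dd) :
    ∀ k : ℕ, 1 ≤ k → ∃ c₁ c₂ : ℤ,
      (γ^k).re * γ.re^3 = γ.re^(k+3) + (k.choose 2 : ℤ)*γ.re^(k+1)*γ.im^2*D + q^2*c₁ ∧
      (γ^k).im * γ.re^3 = (k:ℤ)*γ.re^(k+2)*γ.im + (k.choose 3 : ℤ)*γ.re^k*γ.im^3*D + q^2*c₂ := by
  intro k hk
  induction k, hk using Nat.le_induction with
  | base =>
    refine ⟨0, 0, ?_, ?_⟩
    · have h2 : (1:ℕ).choose 2 = 0 := rfl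
      rw [h2]; push_cast; ring
    · have h3 : (1:ℕ).choose 3 = 0 := rfl
      rw [h3]; push_cast; ring
  | succ k hk ih =>
    obtain ⟨c₁, c₂, hre, him⟩ := ih
    have e2 : (k+1).choose 2 = k.choose 1 + k.choose 2 := Nat.choose_succ_succ k 1
    have e3 : (k+1).choose 3 = k.choose 2 + k.choose 3 := Nat.choose_succ_succ k 2
    refine ⟨γ.re*c₁ + D*γ.im*c₂ + (k.choose 3 : ℤ)*γ.re^k*γ.im^4*dd^2,
            γ.im*c₁ + γ.re*c₂, ?_, ?_⟩
    · have h' : (γ^(k+1)).re = (γ^k).re * γ.re + D * ((γ^k).im * γ.im) := by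
        rw [pow_succ, Zsqrtd.re_mul]; ring
      rw [h', e2, Nat.choose_one_right]
      push_cast
      linear_combination γ.re * hre + D * γ.im * him +
        ((k.choose 3 : ℤ) * γ.re^k * γ.im^4 * (D + q*dd)) * hqd
    · have h' : (γ^(k+1)).im = (γ^k).re * γ.im + (γ^k).im * γ.re := by
        rw [pow_succ, Zsqrtd.im_mul]
      rw [h', e3]
      push_cast
      linear_combination γ.im * hre + γ.re * him


lemma odd_prime_case (hD2 : 2 ≤ D) {q : ℕ} (hq : q.Prime) (hq2 : q ≠ 2)
    {γ : ℤ√D} (hγ : Sol γ)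
    (hdvd : ∀ p : ℕ, p.Prime → (p:ℤ) ∣ (γ^q).im → (p:ℤ) ∣ D) : False := by
  obtain ⟨ha, hb, hnγ⟩ := hγ
  have hq3 : 3 ≤ q := by have := hq.two_le; omega
  obtain ⟨t, M, ht, hM, hre, him⟩ :=
    pow_decomp hD2 (by omega : 0 ≤ γ.re) (by omega : 0 ≤ γ.im) q (by omega)
  set a := γ.re with hadef
  set b := γ.im with hbdef
  set w : ℤ := (q:ℤ)*a^(q-1) + D*b^2*M with hw
  have hbw : (γ^q).im = b * w := by rw [him, hw]; ring
  have hbb : (1:ℤ) ≤ b*b := by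
    have := mul_le_mul hb hb (by norm_num) (by omega : (0:ℤ) ≤ b); linarith
  have hDbb2 : (2:ℤ) ≤ D*(b*b) := by
    have := mul_le_mul hD2 hbb (by norm_num) (by omega : (0:ℤ) ≤ D); linarith
  have haq : (1:ℤ) ≤ a^(q-1) := one_le_pow₀ ha
  have hDb2M : 0 ≤ D*b^2*M := mul_nonneg (mul_nonneg (by omega) (sq_nonneg b)) hM
  have hwge : (q:ℤ) ≤ w := by
    have h1 : (q:ℤ)*1 ≤ (q:ℤ)*a^(q-1) :=
      mul_le_mul_of_nonneg_left haq (by positivity)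
    rw [hw]; linarith
  have hq3' : (3:ℤ) ≤ (q:ℤ) := by exact_mod_cast hq3
  have hnotdvd : ∀ p : ℕ, p.Prime → (p:ℤ) ∣ D → ¬ (p:ℤ) ∣ a := by
    intro p hp hpD hpa
    have h1 : (p:ℤ) ∣ γ.norm := by
      rw [Zsqrtd.norm_def, ← hadef, ← hbdef]
      exact dvd_sub (hpa.mul_left a) ((hpD.mul_right b).mul_right b)
    have hp1 : (2:ℤ) ≤ (p:ℤ) := by exact_mod_cast hp.two_le
    rcases hnγ with h | h <;> rw [h] at h1 <;>
      [exact absurd (Int.le_of_dvd one_pos h1) (by omega);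
       exact absurd (Int.le_of_dvd one_pos ((dvd_neg).mp h1)) (by omega)]
  have hkey : ∀ p : ℕ, p.Prime → (p:ℤ) ∣ w → p = q := by
    intro p hp hpw
    have hpD : (p:ℤ) ∣ D := hdvd p hp (by rw [hbw]; exact hpw.mul_left b)
    have hpa := hnotdvd p hp hpD
    have hpq : (p:ℤ) ∣ (q:ℤ)*a^(q-1) := by
      have h2 : (p:ℤ) ∣ D*b^2*M := ((hpD.mul_right _).mul_right _)
      have h3 : (q:ℤ)*a^(q-1) = w - D*b^2*M := by rw [hw]; ring
      rw [h3]; exact dvd_sub hpw h2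
    have hpint : Prime (p:ℤ) := Nat.prime_iff_prime_int.mp hp
    rcases hpint.dvd_mul.mp hpq with h | h
    · have : p ∣ q := by exact_mod_cast h
      exact (Nat.prime_dvd_prime_iff_eq hp hq).mp this
    · exact absurd (hpint.dvd_of_dvd_pow h) hpa
  set W := w.toNat with hWdef
  have hwW : (W:ℤ) = w := Int.toNat_of_nonneg (by omega)
  have hW3 : 3 ≤ W := by omega
  have hfact := Nat.eq_prime_pow_of_unique_prime_dvd (n := W) (p := q) (by omega)
    (fun {p} hp hpW => hkey p hp (by rw [← hwW]; exact_mod_cast Int.natCast_dvd_natCast.mpr hpW))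
  set m := W.primeFactorsList.length with hmdef
  have hm1 : 1 ≤ m := by
    by_contra h
    have hm0 : m = 0 := by omega
    rw [hm0, pow_zero] at hfact; omega
  have hwqm : w = (q:ℤ)^m := by rw [← hwW, hfact]; push_cast; ring
  have hqw : (q:ℤ) ∣ w := by rw [hwqm]; exact dvd_pow_self _ (by omega)
  have hqD : (q:ℤ) ∣ D := hdvd q hq (by rw [hbw]; exact hqw.mul_left b)
  have hqa : ¬ (q:ℤ) ∣ a := hnotdvd q hq hqD
  rcases eq_or_lt_of_le hm1 with hm | hm2
  · -- m = 1 : w = q, forces a = 1, D = 2, contradiction with q odd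
    have hwq : w = (q:ℤ) := by rw [hwqm, ← hm, pow_one]
    have ha1 : a = 1 := by
      by_contra h
      have ha2 : 2 ≤ a := by omega
      have h4 : (2:ℤ) ≤ a^(q-1) := by
        calc (2:ℤ) = 2^1 := by norm_num
        _ ≤ 2^(q-1) := pow_le_pow_right₀ (by norm_num) (by omega)
        _ ≤ a^(q-1) := pow_le_pow_left₀ (by norm_num) ha2 _
      have h5 : (q:ℤ)*2 ≤ (q:ℤ)*a^(q-1) := mul_le_mul_of_nonneg_left h4 (by positivity)
      rw [hw] at hwq; linarith
    have hDb2 : D*(b*b) = 2 := by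
      rcases hnγ with h | h <;> rw [Zsqrtd.norm_def, ← hadef, ← hbdef, ha1] at h <;>
        linarith [hDbb2]
    have hD2' : D = 2 := by
      rcases eq_or_lt_of_le hbb with h | h
      · rw [← h] at hDb2; linarith
      · exfalso
        have h2 : D*2 ≤ D*(b*b) := mul_le_mul_of_nonneg_left (by omega) (by omega)
        linarith
    rw [hD2'] at hqD
    have : (q:ℤ) ≤ 2 := Int.le_of_dvd (by norm_num) hqD
    omega
  · -- m ≥ 2 : q² ∣ w
    have hq2w : (q:ℤ)^2 ∣ w := by rw [hwqm]; exact pow_dvd_pow _ hm2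
    by_cases hq3'' : q = 3
    · -- q = 3 : Catalan-style descent
      subst hq3''
      have hcube : (γ^3).im = b*(3*a^2 + D*b^2) := by
        have h3 : (γ:ℤ√D)^3 = γ*γ*γ := by ring
        rw [h3, Zsqrtd.im_mul, Zsqrtd.im_mul, Zsqrtd.re_mul, ← hadef, ← hbdef]
        ring
      have hw3 : w = 3*a^2 + D*b^2 :=
        mul_left_cancel₀ (by omega : b ≠ 0) (hbw.symm.trans hcube)
      have h4a : 4*a^2 = w + γ.norm := by
        rw [hw3, Zsqrtd.norm_def, ← hadef, ← hbdef]; ring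
      have hsq : (3:ℤ) ∣ a^2 - 1 := by
        have h3 : (3:ℤ) ∣ a - 1 ∨ (3:ℤ) ∣ a + 1 := by omega
        rcases h3 with h | h
        · have : a^2 - 1 = (a-1)*(a+1) := by ring
          rw [this]; exact h.mul_right _
        · have : a^2 - 1 = (a+1)*(a-1) := by ring
          rw [this]; exact h.mul_right _
      obtain ⟨s, hs⟩ := hsq
      have hc9 : (9:ℤ) ∣ w := by
        have h99 := hq2w
        norm_num at h99
        exact h99
      obtain ⟨c, hc⟩ := hc9
      have hn1 : γ.norm = 1 := by
        rcases hnγ with h | h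
        · exact h
        · exfalso
          rw [h] at h4a
          have hlin : 12*s + 5 = 9*c := by linarith [hs, hc, h4a]
          omega
      rw [hn1] at h4a
      -- (2a-1)(2a+1) = 3^m
      set A := (2*a-1).toNat with hA
      set B := (2*a+1).toNat with hB
      have hAv : (A:ℤ) = 2*a-1 := Int.toNat_of_nonneg (by omega)
      have hBv : (B:ℤ) = 2*a+1 := Int.toNat_of_nonneg (by omega)
      have hABZ : ((A:ℤ))*((B:ℤ)) = (W:ℤ) := by
        rw [hAv, hBv, hwW]; linear_combination h4a
      have hABprod : A * B = 3^m := by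
        rw [← hfact]; exact_mod_cast hABZ
      have hAd : A ∣ 3^m := ⟨B, hABprod.symm⟩
      have hBd : B ∣ 3^m := ⟨A, by rw [← hABprod]; ring⟩
      obtain ⟨i, hi, hAi⟩ := (Nat.dvd_prime_pow Nat.prime_three).mp hAd
      obtain ⟨j, hj, hBj⟩ := (Nat.dvd_prime_pow Nat.prime_three).mp hBd
      have hB3 : 3 ≤ B := by omega
      have hj1 : 1 ≤ j := by
        by_contra h
        have : j = 0 := by omega
        rw [this, pow_zero] at hBj; omega
      have hi0 : i = 0 := by
        by_contra h
        have hi1 : 1 ≤ i := by omega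
        have h3A : 3 ∣ A := hAi ▸ dvd_pow_self 3 (by omega)
        have h3B : 3 ∣ B := hBj ▸ dvd_pow_self 3 (by omega)
        have hBA : B = A + 2 := by omega
        omega
      have hA1 : A = 1 := by rw [hAi, hi0, pow_zero]
      -- a = 1, then norm = 1 gives D*b² = 0, contradiction
      have ha1 : a = 1 := by omega
      rw [Zsqrtd.norm_def, ← hadef, ← hbdef, ha1] at hn1
      linarith [hDbb2]
    · -- q ≥ 5
      have hq5 : 5 ≤ q := by
        have h4 : q ≠ 4 := by intro h; rw [h] at hq; norm_num at hq
        omega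
      obtain ⟨dd, hdd⟩ := hqD
      obtain ⟨c₁, c₂, hre', him'⟩ := pow_congr (q:ℤ) dd hdd q (by omega)
      have hch : (q:ℤ) ∣ (q.choose 3 : ℤ) :=
        Int.natCast_dvd_natCast.mpr (Nat.Prime.dvd_choose_self hq (by norm_num) (by omega))
      have h1 : (q:ℤ)^2 ∣ (γ^q).im * a^3 := by
        rw [hbw]
        exact ((hq2w.mul_left b).mul_right _)
      have h2 : (q:ℤ)^2 ∣ (q.choose 3:ℤ)*a^q*b^3*D := by
        obtain ⟨u, hu⟩ := hch
        refine ⟨u*a^q*b^3*dd, ?_⟩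
        rw [hu, hdd]; ring
      have h3 : (q:ℤ)^2 ∣ (q:ℤ)*a^(q+2)*b := by
        have heq : (q:ℤ)*a^(q+2)*b = (γ^q).im * a^3 - (q.choose 3:ℤ)*a^q*b^3*D - (q:ℤ)^2*c₂ := by
          rw [him', ← hadef, ← hbdef]; ring
        rw [heq]
        exact dvd_sub (dvd_sub h1 h2) (Dvd.intro _ rfl)
      have h4 : (q:ℤ) ∣ a^(q+2)*b := by
        obtain ⟨u, hu⟩ := h3
        refine ⟨u, mul_left_cancel₀ (by positivity : (q:ℤ) ≠ 0) ?_⟩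
        rw [show (q:ℤ)*(a^(q+2)*b) = (q:ℤ)*a^(q+2)*b by ring, hu]; ring
      have hqint : Prime (q:ℤ) := Nat.prime_iff_prime_int.mp hq
      have hqb : (q:ℤ) ∣ b := by
        rcases hqint.dvd_mul.mp h4 with h | h
        · exact absurd (hqint.dvd_of_dvd_pow h) hqa
        · exact h
      have h5 : (q:ℤ)^2 ∣ D*b^2*M := by
        obtain ⟨u, hu⟩ := hqb
        exact ⟨dd*u^2*M*(q:ℤ), by rw [hu, hdd]; ring⟩
      have h6 : (q:ℤ)^2 ∣ (q:ℤ)*a^(q-1) := by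
        have heq : (q:ℤ)*a^(q-1) = w - D*b^2*M := by rw [hw]; ring
        rw [heq]; exact dvd_sub hq2w h5
      have h7 : (q:ℤ) ∣ a^(q-1) := by
        obtain ⟨u, hu⟩ := h6
        refine ⟨u, mul_left_cancel₀ (by positivity : (q:ℤ) ≠ 0) ?_⟩
        rw [hu]; ring
      exact hqa (hqint.dvd_of_dvd_pow h7)

end StormerAux

open StormerAux

/-- Störmer's theorem: if `(x₁, y₁)` is a positive integer solution of the Pell
equation `x² - D y² = e` (with `e = 1` or `e = -1`, `D` a positive nonsquare)
and every prime divisor of `y₁` divides `D`, then `(x₁, y₁)` is the fundamental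
solution, i.e. `x₁ + y₁ √D` is minimal among all positive integer solutions of
the same equation. -/
theorem stormer (D : ℤ) (hD : 0 < D) (hns : ¬ IsSquare D)
    (e : ℤ) (he : e = 1 ∨ e = -1)
    (x₁ y₁ : ℤ) (hx₁ : 0 < x₁) (hy₁ : 0 < y₁)
    (hsol : x₁ ^ 2 - D * y₁ ^ 2 = e)
    (hdiv : ∀ p : ℕ, p.Prime → (p : ℤ) ∣ y₁ → (p : ℤ) ∣ D) :
    ∀ x y : ℤ, 0 < x → 0 < y → x ^ 2 - D * y ^ 2 = e →
      (x₁ : ℝ) + (y₁ : ℝ) * Real.sqrt (D : ℝ) ≤ (x : ℝ) + (y : ℝ) * Real.sqrt (D : ℝ) := by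
  intro x y hx hy hsol'
  by_contra hcon
  push_neg at hcon
  have hD2 : 2 ≤ D := by
    rcases eq_or_lt_of_le (by omega : 1 ≤ D) with h | h
    · exact absurd (⟨1, by omega⟩ : IsSquare D) hns
    · omega
  have hnα : (⟨x₁,y₁⟩ : ℤ√D).norm = e := by
    rw [Zsqrtd.norm_def]
    show x₁ * x₁ - D * y₁ * y₁ = e
    linear_combination hsol
  have hnβ : (⟨x,y⟩ : ℤ√D).norm = e := by
    rw [Zsqrtd.norm_def]
    show x * x - D * y * y = e
    linear_combination hsol'
  have hαS : Sol (⟨x₁,y₁⟩ : ℤ√D) :=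
    ⟨by show 1 ≤ x₁; omega, by show 1 ≤ y₁; omega,
     by rw [hnα]; exact he⟩
  have hβS : Sol (⟨x,y⟩ : ℤ√D) :=
    ⟨by show 1 ≤ x; omega, by show 1 ≤ y; omega,
     by rw [hnβ]; exact he⟩
  obtain ⟨μ, hμS, hmin⟩ := exists_min hD2 ⟨_, hαS⟩
  obtain ⟨n, hn1, hαn⟩ := eq_pow hD2 hμS hmin _ hαS
  obtain ⟨m, hm1, hβm⟩ := eq_pow hD2 hμS hmin _ hβS
  have hμ1 : 1 < v (hD0 hD2) μ := sol_val_gt_one hD2 hμS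
  have hvαβ : v (hD0 hD2) (⟨x,y⟩ : ℤ√D) < v (hD0 hD2) (⟨x₁,y₁⟩ : ℤ√D) := by
    rw [v_apply, v_apply]
    exact hcon
  have hmn : m < n := by
    rw [hαn, hβm, map_pow, map_pow] at hvαβ
    exact (pow_lt_pow_iff_right₀ hμ1).mp hvαβ
  obtain ⟨q, hq, hqn⟩ := Nat.exists_prime_and_dvd (show n ≠ 1 by omega)
  obtain ⟨j, hj⟩ := hqn
  have hj1 : 1 ≤ j := by
    rcases Nat.eq_zero_or_pos j with h | h
    · rw [h, mul_zero] at hj; omega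
    · omega
  have hγq : (μ^j)^q = (⟨x₁,y₁⟩ : ℤ√D) := by
    rw [← pow_mul, mul_comm j q, ← hj]
    exact hαn.symm
  have hγS : Sol (μ^j) := sol_pow hD2 hμS j hj1
  by_cases hq2 : q = 2
  · subst hq2
    -- q = 2 case
    have him2 : y₁ = (μ^j).re * (μ^j).im + (μ^j).im * (μ^j).re := by
      have h1 : ((μ^j)^2).im = y₁ := by rw [hγq]
      rw [pow_two, Zsqrtd.im_mul] at h1
      linarith [h1]
    have ha1 : (μ^j).re = 1 := by
      rcases eq_or_lt_of_le hγS.1 with h | h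
      · exact h.symm
      · exfalso
        obtain ⟨p, hp, hpd⟩ := Nat.exists_prime_and_dvd
          (show (μ^j).re.natAbs ≠ 1 by omega)
        have hpa : (p:ℤ) ∣ (μ^j).re := by
          have h2 : ((p:ℤ)).natAbs ∣ (μ^j).re.natAbs := by simpa using hpd
          exact Int.natAbs_dvd_natAbs.mp h2
        have hpy : (p:ℤ) ∣ y₁ := by
          rw [him2]
          exact dvd_add ((hpa.mul_right _)) ((hpa.mul_left _))
        have hpD := hdiv p hp hpy
        have hpn : (p:ℤ) ∣ (μ^j).norm := by
          rw [Zsqrtd.norm_def]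
          exact dvd_sub (hpa.mul_right _) ((hpD.mul_right _).mul_right _)
        have hp2 : (2:ℤ) ≤ (p:ℤ) := by exact_mod_cast hp.two_le
        rcases hγS.2.2 with h' | h' <;> rw [h'] at hpn
        · exact absurd (Int.le_of_dvd one_pos hpn) (by omega)
        · exact absurd (Int.le_of_dvd one_pos ((dvd_neg).mp hpn)) (by omega)
    have hbb : (1:ℤ) ≤ (μ^j).im * (μ^j).im := by
      have h0 := hγS.2.1
      have := mul_le_mul h0 h0 (by norm_num) (by omega : (0:ℤ) ≤ (μ^j).im)
      linarith
    have hDbb2 : (2:ℤ) ≤ D * ((μ^j).im * (μ^j).im) := by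
      have := mul_le_mul hD2 hbb (by norm_num) (by omega : (0:ℤ) ≤ D)
      linarith
    have hnγ := hγS.2.2
    rw [Zsqrtd.norm_def, ha1] at hnγ
    have hDb2 : D * ((μ^j).im * (μ^j).im) = 2 := by
      rcases hnγ with h' | h' <;> linarith
    have hbb1 : (μ^j).im = 1 := by
      rcases eq_or_lt_of_le hγS.2.1 with h' | h'
      · exact h'.symm
      · exfalso
        have h2 : (2:ℤ)*2 ≤ (μ^j).im * (μ^j).im :=
          mul_le_mul (by omega) (by omega) (by norm_num) (by omega)
        have h3 : D*(2*2) ≤ D*((μ^j).im * (μ^j).im) :=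
          mul_le_mul_of_nonneg_left h2 (by omega)
        linarith
    have hDeq : D = 2 := by
      rw [hbb1] at hDb2; linarith
    have hnγval : (μ^j).norm = -1 := by
      rw [Zsqrtd.norm_def, ha1]
      linarith [hDb2]
    have he1 : e = 1 := by
      have h1 : (⟨x₁,y₁⟩ : ℤ√D).norm = (μ^j).norm * (μ^j).norm := by
        rw [← hγq, pow_two, Zsqrtd.norm_mul]
      rw [hnα, hnγval] at h1
      linarith
    -- v γ = 1 + rt D, so μ = γ
    have hvγ : v (hD0 hD2) (μ^j) = 1 + rt D := by
      rw [v_apply, ha1, hbb1]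
      push_cast
      ring
    have hvμγ : v (hD0 hD2) μ = v (hD0 hD2) (μ^j) := by
      refine le_antisymm (hmin _ hγS) ?_
      rw [hvγ]
      exact sol_val_ge hD2 hμS
    have hμγ : μ = μ^j := val_inj hD2 hμS hγS hvμγ
    have hj1' : j = 1 := by
      by_contra h'
      have hj2 : 2 ≤ j := by omega
      have hvj : v (hD0 hD2) μ = (v (hD0 hD2) μ)^j := by
        conv_lhs => rw [hμγ]
        rw [map_pow]
      have h2 : (v (hD0 hD2) μ)^2 ≤ (v (hD0 hD2) μ)^j :=
        pow_le_pow_right₀ (le_of_lt hμ1) hj2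
      have h3 : v (hD0 hD2) μ * 1 < v (hD0 hD2) μ * v (hD0 hD2) μ :=
        mul_lt_mul_of_pos_left hμ1 (lt_trans one_pos hμ1)
      nlinarith [hvj, h2, h3]
    have hn2' : n = 2 := by omega
    have hm1' : m = 1 := by omega
    have hβμ : (⟨x,y⟩ : ℤ√D) = μ := by rw [hβm, hm1', pow_one]
    have hem1 : e = -1 := by
      rw [← hnβ, hβμ, hμγ]
      exact hnγval
    omega
  · exact odd_prime_case hD2 hq hq2 hγS
      (fun p hp hpd => hdiv p hp (by rwa [hγq] at hpd))
end

section
/- Let D be a positive nonsquare integer such that x² − D y² = −1 is solvable in positive integers, and let (x, y) be a positive integer solution of x² − D y² = −1 with y = pⁿ y′, where p is a prime not dividing D and n is a positive integer. If every prime divisor of y′ divides D, then x + y√D = ε, or x + y√D = ε^q for some odd prime q with gcd(p, q) = 1, where ε = x₁ + y₁√D and (x₁, y₁) is the fundamental solution of x² − D y² = −1. -/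
namespace StormerAux


lemma sqrtd_pow_even (d : ℤ) (i : ℕ) :
    (Zsqrtd.sqrtd : ℤ√d) ^ (2 * i) = ((d ^ i : ℤ) : ℤ√d) := by
  induction i with
  | zero => simp
  | succ i ih =>
    have h : 2 * (i + 1) = 2 * i + 2 := by ring
    rw [h, pow_add, ih, sq, Zsqrtd.dmuld]
    push_cast
    ring

lemma sqrtd_pow_im (d : ℤ) (j : ℕ) :
    ((Zsqrtd.sqrtd : ℤ√d) ^ j).im = if j % 2 = 1 then d ^ (j / 2) else 0 := by
  rcases Nat.even_or_odd j with ⟨i, hi⟩ | ⟨i, hi⟩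
  · obtain rfl : j = 2 * i := by omega
    rw [sqrtd_pow_even, Zsqrtd.im_intCast, if_neg (by omega)]
  · obtain rfl : j = 2 * i + 1 := by omega
    rw [pow_succ, sqrtd_pow_even, Zsqrtd.im_smul, Zsqrtd.im_sqrtd, if_pos (by omega)]
    rw [show (2 * i + 1) / 2 = i by omega]
    ring

lemma im_sum {d : ℤ} {α : Type*} (s : Finset α) (f : α → ℤ√d) :
    (∑ k ∈ s, f k).im = ∑ k ∈ s, (f k).im :=
  map_sum (AddMonoidHom.mk' Zsqrtd.im (fun a b => Zsqrtd.im_add a b)) f s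

lemma sigma_id (d : ℤ) (hd : 1 ≤ d) (q : ℕ) (hq : q.Prime) (i : ℕ) (hi : q = 2 * i + 1)
    (A B : ℤ) (hA : 0 ≤ A) (hB : 1 ≤ B) :
    ∃ σ c : ℤ, 0 ≤ c ∧ ((⟨A, B⟩ : ℤ√d) ^ q).im = B * σ ∧
      σ = B ^ (2 * i) * d ^ i + (q : ℤ) * A ^ (2 * i) + (q : ℤ) * d * B ^ 2 * c := by
  have hi1 : 1 ≤ i := by
    have := hq.two_le; omega
  set g : ℕ → ℤ := fun k => A ^ k * B ^ (q - k) * ((q.choose k : ℕ) : ℤ) *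
      (if (q - k) % 2 = 1 then d ^ ((q - k) / 2) else 0) with hg
  have key : ((⟨A, B⟩ : ℤ√d) ^ q).im = ∑ k ∈ Finset.range (q + 1), g k := by
    rw [Zsqrtd.decompose, add_pow, im_sum]
    refine Finset.sum_congr rfl fun k hk => ?_
    have h1 : ((A : ℤ√d) ^ k * (Zsqrtd.sqrtd * (B : ℤ√d)) ^ (q - k) * ((q.choose k : ℕ) : ℤ√d))
        = (((A ^ k * B ^ (q - k) * ((q.choose k : ℕ) : ℤ) : ℤ)) : ℤ√d) *
            Zsqrtd.sqrtd ^ (q - k) := by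
      push_cast
      ring
    rw [h1, Zsqrtd.im_smul, sqrtd_pow_im]
  have h0mem : 0 ∈ Finset.range (q + 1) := by simp
  have h1mem : 2 * i ∈ (Finset.range (q + 1)).erase 0 :=
    Finset.mem_erase.mpr ⟨by omega, Finset.mem_range.mpr (by omega)⟩
  have e1 : ∑ k ∈ Finset.range (q + 1), g k
      = g 0 + ∑ k ∈ (Finset.range (q + 1)).erase 0, g k :=
    (Finset.add_sum_erase _ g h0mem).symm
  have e2 : ∑ k ∈ (Finset.range (q + 1)).erase 0, g k
      = g (2 * i) + ∑ k ∈ ((Finset.range (q + 1)).erase 0).erase (2 * i), g k :=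
    (Finset.add_sum_erase _ g h1mem).symm
  have hg0 : g 0 = B ^ (2 * i + 1) * d ^ i := by
    rw [hg]
    simp only [pow_zero, one_mul, Nat.choose_zero_right, Nat.cast_one, mul_one, Nat.sub_zero]
    rw [if_pos (by omega), hi, show (2 * i + 1) / 2 = i by omega]
  have hg1 : g (2 * i) = (q : ℤ) * A ^ (2 * i) * B := by
    rw [hg]
    simp only []
    rw [show q - 2 * i = 1 by omega, if_pos (by norm_num), show (1 : ℕ) / 2 = 0 by norm_num]
    rw [show q.choose (2 * i) = q by rw [hi]; exact Nat.choose_succ_self_right (2 * i)]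
    ring
  have hrest : ∀ k ∈ ((Finset.range (q + 1)).erase 0).erase (2 * i),
      ((q : ℤ) * d * B ^ 3 ∣ g k) ∧ 0 ≤ g k := by
    intro k hk
    rw [Finset.mem_erase, Finset.mem_erase, Finset.mem_range] at hk
    obtain ⟨hk2i, hk0, hkq⟩ := hk
    set j := q - k with hj
    by_cases hjodd : j % 2 = 1
    · have hj3 : 3 ≤ j := by omega
      have hkq' : k < q := by omega
      have hqC : (q : ℤ) ∣ ((q.choose k : ℕ) : ℤ) :=
        Int.natCast_dvd_natCast.mpr (Nat.Prime.dvd_choose_self hq hk0 hkq')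
      have hdd : d ∣ d ^ (j / 2) := dvd_pow_self d (by omega : j / 2 ≠ 0)
      have hBB : B ^ 3 ∣ B ^ j := pow_dvd_pow B (by omega : 3 ≤ j)
      have h := mul_dvd_mul (mul_dvd_mul hqC hdd) hBB
      constructor
      · refine h.trans ⟨A ^ k, ?_⟩
        rw [hg]; simp only []; rw [if_pos hjodd]; ring
      · have hnn := mul_nonneg (mul_nonneg (mul_nonneg (pow_nonneg hA k)
          (pow_nonneg (by linarith : (0:ℤ) ≤ B) j)) (Int.natCast_nonneg (q.choose k)))
          (pow_nonneg (by linarith : (0:ℤ) ≤ d) (j / 2))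
        rw [hg]; simp only []; rw [if_pos hjodd]; exact hnn
    · -- j even: g k = 0
      have hz : g k = 0 := by rw [hg]; simp only []; rw [if_neg hjodd]; ring
      rw [hz]
      exact ⟨dvd_zero _, le_refl 0⟩
  -- assemble
  have hSdvd : (q : ℤ) * d * B ^ 3 ∣ ∑ k ∈ ((Finset.range (q + 1)).erase 0).erase (2 * i), g k :=
    Finset.dvd_sum fun k hk => (hrest k hk).1
  have hSnn : 0 ≤ ∑ k ∈ ((Finset.range (q + 1)).erase 0).erase (2 * i), g k :=
    Finset.sum_nonneg fun k hk => (hrest k hk).2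
  obtain ⟨c, hcS⟩ := hSdvd
  have hqpos : (0 : ℤ) < (q : ℤ) := by exact_mod_cast hq.pos
  have hcpos : 0 ≤ c := by
    by_contra hneg
    push_neg at hneg
    have hK : (0 : ℤ) < (q : ℤ) * d * B ^ 3 := by positivity
    nlinarith only [hcS, hSnn, hK, hneg]
  refine ⟨B ^ (2 * i) * d ^ i + (q : ℤ) * A ^ (2 * i) + (q : ℤ) * d * B ^ 2 * c, c, hcpos, ?_, rfl⟩
  rw [key, e1, e2, hg0, hg1, hcS]
  ring




lemma lemQ (d : ℤ) (hd2 : 2 ≤ d) (p : ℕ) (hp : p.Prime) (hpD : ¬ (p : ℤ) ∣ d)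
    (q : ℕ) (hq : q.Prime) (i : ℕ) (hi : q = 2 * i + 1) (hi1 : 1 ≤ i)
    (A B : ℤ) (hA : 1 ≤ A) (hB : 1 ≤ B) (hsol : A ^ 2 - d * B ^ 2 = -1)
    (σ c : ℤ) (hc : 0 ≤ c)
    (hid : σ = B ^ (2 * i) * d ^ i + (q : ℤ) * A ^ (2 * i) + (q : ℤ) * d * B ^ 2 * c)
    (hprimes : ∀ r : ℕ, r.Prime → (r : ℤ) ∣ σ → r = p ∨ (r : ℤ) ∣ d) :
    (p : ℤ) ∣ σ ∧ ¬ (p : ℤ) ∣ B ∧ q ≠ p := by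
  have hqint : Prime (q : ℤ) := Nat.prime_iff_prime_int.mp hq
  have hpint : Prime (p : ℤ) := Nat.prime_iff_prime_int.mp hp
  have hq3 : (3 : ℤ) ≤ (q : ℤ) := by exact_mod_cast (by omega : 3 ≤ q)
  -- size bound
  have hB2i : (1 : ℤ) ≤ B ^ (2 * i) := one_le_pow₀ hB
  have hA2i : (1 : ℤ) ≤ A ^ (2 * i) := one_le_pow₀ hA
  have hdi : (2 : ℤ) ≤ d ^ i := le_trans hd2 (le_self_pow₀ (by linarith) (by omega))
  have htail : (0 : ℤ) ≤ (q : ℤ) * d * B ^ 2 * c := by positivity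
  have hσge : (q : ℤ) + 1 ≤ σ := by nlinarith only [hB2i, hA2i, hdi, htail, hq3, hid]
  -- coprimality helpers
  have hABcop : ∀ r : ℤ, Prime r → r ∣ A → r ∣ B → False := by
    intro r hr h1 h2
    have : r ∣ (1 : ℤ) := by
      have : r ∣ A ^ 2 - d * B ^ 2 := dvd_sub (dvd_pow h1 two_ne_zero)
        (Dvd.dvd.mul_left (dvd_pow h2 two_ne_zero) d)
      rw [hsol] at this
      exact (dvd_neg.mp this)
    exact hr.not_unit (isUnit_of_dvd_one this)
  have hAdcop : ∀ r : ℤ, Prime r → r ∣ A → r ∣ d → False := by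
    intro r hr h1 h2
    have : r ∣ (1 : ℤ) := by
      have : r ∣ A ^ 2 - d * B ^ 2 := dvd_sub (dvd_pow h1 two_ne_zero)
        (Dvd.dvd.mul_right h2 (B ^ 2))
      rw [hsol] at this
      exact (dvd_neg.mp this)
    exact hr.not_unit (isUnit_of_dvd_one this)
  -- q^2 does not divide σ
  have hq2 : ¬ (q : ℤ) ^ 2 ∣ σ := by
    intro hq2σ
    have hqσ : (q : ℤ) ∣ σ := (dvd_pow_self _ two_ne_zero).trans hq2σ
    have hqBD : (q : ℤ) ∣ B ^ (2 * i) * d ^ i := by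
      have h := dvd_sub hqσ (Dvd.intro (A ^ (2 * i) + d * B ^ 2 * c) rfl :
        (q : ℤ) ∣ (q : ℤ) * (A ^ (2 * i) + d * B ^ 2 * c))
      have he : σ - (q : ℤ) * (A ^ (2 * i) + d * B ^ 2 * c) = B ^ (2 * i) * d ^ i := by
        rw [hid]; ring
      rwa [he] at h
    have hBorD : (q : ℤ) ∣ B ∨ (q : ℤ) ∣ d := by
      rcases hqint.dvd_mul.mp hqBD with h | h
      · exact Or.inl (hqint.dvd_of_dvd_pow h)
      · exact Or.inr (hqint.dvd_of_dvd_pow h)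
    have hqA : (q : ℤ) ∣ A := by
      have hsq : (q : ℤ) ^ 2 ∣ B ^ (2 * i) * d ^ i + (q : ℤ) * d * B ^ 2 * c := by
        rcases hBorD with h | h
        · obtain ⟨b, rfl⟩ := h
          refine dvd_add ?_ ?_
          · exact Dvd.dvd.mul_right ((pow_dvd_pow_of_dvd (Dvd.intro b rfl) 2).trans
              (pow_dvd_pow _ (by omega : 2 ≤ 2 * i))) _
          · exact ⟨(q:ℤ) * d * b ^ 2 * c, by ring⟩
        · -- q ∣ d ; need q ≠ 3 hence i ≥ 2
          have hq5 : 2 ≤ i := by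
            have hqne3 : q ≠ 3 := by
              intro h3
              subst h3
              have h3d : (3 : ℤ) ∣ d := h
              obtain ⟨e, he⟩ := h3d
              have hA2 : A ^ 2 + 1 = d * B ^ 2 := by linarith
              have h31 : (3:ℤ) ∣ A ^ 2 + 1 := by rw [hA2, he]; exact ⟨e * B ^ 2, by ring⟩
              have h2 : ((A ^ 2 + 1 : ℤ) : ZMod 3) = 0 :=
                (ZMod.intCast_zmod_eq_zero_iff_dvd _ 3).mpr h31
              push_cast at h2
              revert h2
              generalize ((A : ZMod 3)) = a
              revert a
              decide
            omega
          refine dvd_add ?_ ?_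
          · exact Dvd.dvd.mul_left ((pow_dvd_pow_of_dvd h 2).trans
              (pow_dvd_pow _ hq5)) _
          · obtain ⟨e, rfl⟩ := h
            exact ⟨e * B ^ 2 * c, by ring⟩
      have hsq2 : (q : ℤ) ^ 2 ∣ (q : ℤ) * A ^ (2 * i) := by
        have h := dvd_sub hq2σ hsq
        have he : σ - (B ^ (2 * i) * d ^ i + (q : ℤ) * d * B ^ 2 * c)
            = (q : ℤ) * A ^ (2 * i) := by rw [hid]; ring
        rwa [he] at h
      obtain ⟨t, ht⟩ := hsq2
      have hqne : (q : ℤ) ≠ 0 := by omega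
      have : A ^ (2 * i) = (q : ℤ) * t := by
        have : (q : ℤ) * A ^ (2 * i) = (q : ℤ) * ((q : ℤ) * t) := by rw [ht]; ring
        exact mul_left_cancel₀ hqne this
      exact hqint.dvd_of_dvd_pow ⟨t, this⟩
    rcases hBorD with h | h
    · exact hABcop _ hqint hqA h
    · exact hAdcop _ hqint hqA h
  -- any prime dividing σ and d equals q
  have hdq : ∀ r : ℕ, r.Prime → (r : ℤ) ∣ σ → (r : ℤ) ∣ d → r = q := by
    intro r hr hrσ hrd
    have hrint : Prime (r : ℤ) := Nat.prime_iff_prime_int.mp hr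
    have hrq : (r : ℤ) ∣ (q : ℤ) * A ^ (2 * i) := by
      have h1 : (r : ℤ) ∣ B ^ (2 * i) * d ^ i + (q : ℤ) * d * B ^ 2 * c :=
        dvd_add (Dvd.dvd.mul_left (hrd.trans (dvd_pow_self d (by omega : i ≠ 0))) _)
          (((hrd.mul_left ((q : ℤ))).mul_right (B ^ 2)).mul_right c)
      have h := dvd_sub hrσ h1
      have he : σ - (B ^ (2 * i) * d ^ i + (q : ℤ) * d * B ^ 2 * c)
          = (q : ℤ) * A ^ (2 * i) := by rw [hid]; ring
      rwa [he] at h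
    rcases hrint.dvd_mul.mp hrq with h | h
    · exact_mod_cast (Nat.prime_dvd_prime_iff_eq hr hq).mp (Int.natCast_dvd_natCast.mp h)
    · exact absurd hrd (fun hd' => hAdcop _ hrint (hrint.dvd_of_dvd_pow h) hd')
  -- if all prime divisors of σ are q, contradiction
  have hone : ¬ (∀ r : ℕ, r.Prime → (r : ℤ) ∣ σ → r = q) := by
    intro hall
    have hσpos : (0 : ℤ) < σ := by linarith
    have hna1 : σ.natAbs ≠ 1 := by omega
    have hr0 : σ.natAbs.minFac.Prime := Nat.minFac_prime hna1
    have hr0σ : (σ.natAbs.minFac : ℤ) ∣ σ := by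
      have h1 : (σ.natAbs.minFac : ℤ) ∣ (σ.natAbs : ℤ) :=
        Int.natCast_dvd_natCast.mpr (Nat.minFac_dvd _)
      rwa [Int.natAbs_of_nonneg hσpos.le] at h1
    have h0 := hall _ hr0 hr0σ
    rw [h0] at hr0σ
    obtain ⟨t, ht⟩ := hr0σ
    have ht2 : 2 ≤ t := by nlinarith only [ht, hσge, hq3]
    have hna2 : t.natAbs ≠ 1 := by omega
    have hr1 : t.natAbs.minFac.Prime := Nat.minFac_prime hna2
    have hr1t : (t.natAbs.minFac : ℤ) ∣ t := by
      have h1 : (t.natAbs.minFac : ℤ) ∣ (t.natAbs : ℤ) :=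
        Int.natCast_dvd_natCast.mpr (Nat.minFac_dvd _)
      rwa [Int.natAbs_of_nonneg (by omega : (0:ℤ) ≤ t)] at h1
    have hr1σ : (t.natAbs.minFac : ℤ) ∣ σ := ht ▸ hr1t.mul_left _
    have h1 := hall _ hr1 hr1σ
    rw [h1] at hr1t
    obtain ⟨u, hu⟩ := hr1t
    exact hq2 ⟨u, by rw [ht, hu]; ring⟩
  -- p divides σ
  have hpσ : (p : ℤ) ∣ σ := by
    by_contra hnp
    exact hone fun r hr hrσ => by
      rcases hprimes r hr hrσ with rfl | hrd
      · exact absurd hrσ hnp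
      · exact hdq r hr hrσ hrd
  -- q ≠ p
  have hqnep : q ≠ p := by
    intro heq
    exact hone fun r hr hrσ => by
      rcases hprimes r hr hrσ with rfl | hrd
      · exact heq.symm
      · exact hdq r hr hrσ hrd
  -- p does not divide B
  have hpB : ¬ (p : ℤ) ∣ B := by
    intro hpB
    have hpqA : (p : ℤ) ∣ (q : ℤ) * A ^ (2 * i) := by
      have h1 : (p : ℤ) ∣ B ^ (2 * i) * d ^ i + (q : ℤ) * d * B ^ 2 * c :=
        dvd_add (Dvd.dvd.mul_right (hpB.trans (dvd_pow_self B (by omega : 2 * i ≠ 0))) _)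
          (Dvd.dvd.mul_right (Dvd.dvd.mul_left (hpB.trans (dvd_pow_self B two_ne_zero)) _) _)
      have h := dvd_sub hpσ h1
      have he : σ - (B ^ (2 * i) * d ^ i + (q : ℤ) * d * B ^ 2 * c)
          = (q : ℤ) * A ^ (2 * i) := by rw [hid]; ring
      rwa [he] at h
    rcases hpint.dvd_mul.mp hpqA with h | h
    · exact hqnep ((Nat.prime_dvd_prime_iff_eq hp hq).mp (Int.natCast_dvd_natCast.mp h)).symm
    · exact hABcop _ hpint (hpint.dvd_of_dvd_pow h) hpB
  exact ⟨hpσ, hpB, hqnep⟩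



set_option maxHeartbeats 2000000 in
lemma partA (d : ℤ) (hd2 : 2 ≤ d) (hns : ¬ IsSquare d)
    (x₁ y₁ : ℤ) (hx₁ : 0 < x₁) (hy₁ : 0 < y₁) (hsol₁ : x₁ ^ 2 - d * y₁ ^ 2 = -1)
    (hmin : ∀ u v : ℤ, 0 < u → 0 < v → u ^ 2 - d * v ^ 2 = -1 →
      (x₁ : ℝ) + (y₁ : ℝ) * Real.sqrt (d : ℝ) ≤ (u : ℝ) + (v : ℝ) * Real.sqrt (d : ℝ)) :
    ∀ (k : ℕ) (x y : ℤ), 0 < x → 0 < y → y.toNat ≤ k → x ^ 2 - d * y ^ 2 = -1 →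
      ∃ m : ℕ, Odd m ∧ (⟨x, y⟩ : ℤ√d) = (⟨x₁, y₁⟩ : ℤ√d) ^ m := by
  set s : ℝ := Real.sqrt (d : ℝ) with hs_def
  have hd0 : (0 : ℝ) ≤ (d : ℝ) := by exact_mod_cast (by omega : (0:ℤ) ≤ d)
  have hss : s * s = ((d : ℤ) : ℝ) := Real.mul_self_sqrt hd0
  have hdR : (2 : ℝ) ≤ (d : ℝ) := by exact_mod_cast hd2
  have hs0 : 0 ≤ s := Real.sqrt_nonneg _
  have hs1 : 1 < s := by nlinarith only [hss, hdR, hs0]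
  have hirr : Irrational s := by
    rw [hs_def]
    exact (irrational_sqrt_intCast_iff_of_nonneg (by omega)).mpr hns
  have hconj : ∀ a b : ℤ, a ^ 2 - d * b ^ 2 = -1 →
      ((a : ℝ) + b * s) * ((a : ℝ) - b * s) = -1 := by
    intro a b h
    have hcast : ((a : ℝ)) ^ 2 - (d : ℝ) * (b : ℝ) ^ 2 = -1 := by exact_mod_cast h
    linear_combination hcast - (b : ℝ) ^ 2 * hss
  have hx1R : (1 : ℝ) ≤ (x₁ : ℝ) := by exact_mod_cast hx₁
  have hy1R : (1 : ℝ) ≤ (y₁ : ℝ) := by exact_mod_cast hy₁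
  set e : ℝ := (x₁ : ℝ) + y₁ * s with he_def
  have hepos : 1 < e := by nlinarith only [hx1R, hy1R, hs1, he_def]
  have hεne : e ≠ 0 := by linarith
  have hconj_e : e * ((x₁ : ℝ) - y₁ * s) = -1 := hconj x₁ y₁ hsol₁
  have hnormε : (⟨x₁, y₁⟩ : ℤ√d).norm = -1 := by
    show x₁ * x₁ - d * y₁ * y₁ = -1
    linear_combination hsol₁
  intro k
  induction k with
  | zero => intro x y hx hy hk _; exfalso; omega
  | succ k ih =>
    intro x y hx hy hk hsol
    have hxR : (1 : ℝ) ≤ (x : ℝ) := by exact_mod_cast hx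
    have hyR : (1 : ℝ) ≤ (y : ℝ) := by exact_mod_cast hy
    set zr : ℝ := (x : ℝ) + y * s with hzr_def
    have hzpos : 1 < zr := by nlinarith only [hxR, hyR, hs1, hzr_def]
    have hzrne : zr ≠ 0 := by linarith
    have hminxy := hmin x y hx hy hsol
    have hconj_z : zr * ((x : ℝ) - y * s) = -1 := hconj x y hsol
    by_cases hcase : zr = e
    · -- base case
      have hy_eq : y = y₁ := by
        by_contra hne
        have := (irrational_iff_ne_rational s).mp hirr (x₁ - x) (y - y₁)
        apply this (sub_ne_zero.mpr hne)
        have hnz : ((y : ℝ)) - (y₁ : ℝ) ≠ 0 := by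
          intro h0
          exact hne (by exact_mod_cast sub_eq_zero.mp h0)
        have h1 : ((y : ℝ) - y₁) * s = (x₁ : ℝ) - x := by
          rw [he_def, hzr_def] at hcase
          linarith [hcase]
        push_cast
        rw [eq_div_iff hnz]
        linarith [h1]
      have hx_eq : x = x₁ := by
        have : (x : ℝ) = x₁ := by
          rw [he_def, hzr_def, hy_eq] at hcase
          linarith
        exact_mod_cast this
      subst hx_eq; subst hy_eq
      exact ⟨1, odd_one, by rw [pow_one]⟩
    · have hgt : e < zr := hminxy.lt_of_ne (Ne.symm hcase)
      set ε : ℤ√d := ⟨x₁, y₁⟩ with hε_def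
      set w : ℤ√d := ⟨x, y⟩ * (star ε) ^ 2 with hw_def
      have hnormz : (⟨x, y⟩ : ℤ√d).norm = -1 := by
        show x * x - d * y * y = -1
        linear_combination hsol
      have hnormsε : (star ε).norm = -1 := by
        rw [show star ε = (⟨x₁, -y₁⟩ : ℤ√d) from rfl]
        show x₁ * x₁ - d * (-y₁) * (-y₁) = -1
        linear_combination hsol₁
      have hnormw : w.norm = -1 := by
        rw [hw_def, Zsqrtd.norm_mul, sq, Zsqrtd.norm_mul, hnormz, hnormsε]
        ring
      set u : ℤ := w.re with hu_def
      set v : ℤ := w.im with hv_def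
      have hsolw : u ^ 2 - d * v ^ 2 = -1 := by
        have h := hnormw
        rw [Zsqrtd.norm_def] at h
        linear_combination h
      -- real value of w
      let f : ℤ√d →+* ℝ := Zsqrtd.lift ⟨s, hss⟩
      have hf : ∀ z : ℤ√d, f z = (z.re : ℝ) + (z.im : ℝ) * s := fun z => rfl
      set fw : ℝ := zr / e ^ 2 with hfw_def
      set gw : ℝ := e ^ 2 / zr with hgw_def
      have hfwpos : (0 : ℝ) < fw := by positivity
      have hgwpos : (0 : ℝ) < gw := by positivity
      have hfg : fw * gw = 1 := by
        rw [hfw_def, hgw_def]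
        field_simp
      have hfz : fw * e ^ 2 = zr := by
        rw [hfw_def]
        field_simp
      have hfw : f w = fw := by
        rw [hw_def, map_mul, map_pow, hf, hf]
        have h1 : (((⟨x, y⟩ : ℤ√d)).re : ℝ) + (((⟨x, y⟩ : ℤ√d)).im : ℝ) * s = zr := by
          rw [hzr_def]
        have h2 : (((star ε).re : ℝ)) + ((star ε).im : ℝ) * s = (x₁ : ℝ) - y₁ * s := by
          rw [Zsqrtd.re_star, Zsqrtd.im_star]
          push_cast
          ring
        rw [h1, h2]
        have h3 : (x₁ : ℝ) - y₁ * s = -1 / e := by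
          rw [eq_div_iff hεne]
          linarith [hconj_e]
        rw [h3, hfw_def]
        field_simp
      have hfwval : (u : ℝ) + v * s = fw := by
        rw [← hfw]
        exact (hf w).symm
      have hconj_w : ((u : ℝ) + v * s) * ((u : ℝ) - v * s) = -1 := hconj u v hsolw
      have hstarw : (u : ℝ) - v * s = -gw := by
        rw [hfwval] at hconj_w
        have h0 : fw * (((u : ℝ) - v * s) + gw) = 0 := by
          rw [mul_add, hconj_w, hfg]
          ring
        rcases mul_eq_zero.mp h0 with h | h
        · exact absurd h (ne_of_gt hfwpos)
        · linarith
      have h2vs : 2 * (v : ℝ) * s = fw + gw := by linarith only [hfwval, hstarw]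
      have hvpos : 0 < v := by
        have hvs : (0 : ℝ) < (v : ℝ) * s := by linarith only [h2vs, hfwpos, hgwpos]
        have hr : (0 : ℝ) < (v : ℝ) := by
          rcases mul_pos_iff.mp hvs with ⟨h1, _⟩ | ⟨_, h2⟩
          · exact h1
          · linarith
        exact_mod_cast hr
      -- step : e^3 ≤ zr
      have hstep : e ^ 3 ≤ zr := by
        by_contra hlt
        push_neg at hlt
        have hfw_lb : 1 < fw * e := by nlinarith only [hfz, hgt, hepos]
        have hfw_ub : fw < e := by
          have he2 : (0:ℝ) < e ^ 2 := by positivity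
          rw [hfw_def, div_lt_iff₀ he2]
          nlinarith only [hlt]
        have hune : u ≠ 0 := by
          intro h0
          rw [h0] at hsolw
          have hv1 : (1:ℤ) ≤ v := hvpos
          nlinarith only [hsolw, hv1, hd2]
        rcases hune.lt_or_gt with hun | hup
        · have hmin2 := hmin (-u) v (by omega) hvpos (by linear_combination hsolw)
          have hcast : ((-u : ℤ) : ℝ) + (v : ℝ) * s = -((u:ℝ) - v * s) := by push_cast; ring
          rw [hcast, hstarw, neg_neg] at hmin2
          -- hmin2 : e ≤ gw, but gw < e
          have h2 : gw < e := by nlinarith only [hfg, hfw_lb, hfwpos, hgwpos]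
          linarith
        · have hmin2 := hmin u v hup hvpos hsolw
          rw [hfwval] at hmin2
          linarith
      -- descent
      have hfw_ge : e ≤ fw := by
        have he2 : (0:ℝ) < e ^ 2 := by positivity
        rw [hfw_def, le_div_iff₀ he2]
        nlinarith only [hstep]
      have hfwgt1 : 1 < fw := lt_of_lt_of_le hepos hfw_ge
      have hgwlt1 : gw < 1 := by nlinarith only [hfg, hfwgt1, hgwpos]
      have hupos : 0 < u := by
        have hr : (0 : ℝ) < (u : ℝ) := by linarith only [hfwval, hstarw, hfwgt1, hgwlt1]
        exact_mod_cast hr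
      have hvy : v < y := by
        set izr : ℝ := 1 / zr with hizr_def
        have hzi : zr * izr = 1 := by
          rw [hizr_def]; field_simp
        have hcz : (x : ℝ) - y * s = -izr := by
          have h0 : zr * (((x : ℝ) - y * s) + izr) = 0 := by
            rw [mul_add, hconj_z, hzi]
            ring
          rcases mul_eq_zero.mp h0 with h | h
          · exact absurd h hzrne
          · linarith
        have h2ys : 2 * (y : ℝ) * s = zr + izr := by
          have : zr - ((x : ℝ) - y * s) = 2 * (y:ℝ) * s := by rw [hzr_def]; ring
          linarith [hcz]
        have hfwzr : fw < zr := by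
          have he2' : 1 < e ^ 2 := by nlinarith only [hepos]
          nlinarith only [hfz, he2', hfwpos]
        have hzf1 : 1 < zr * fw := by nlinarith only [hzpos, hfwgt1]
        have key : (zr - fw) * (zr * fw - 1) > 0 :=
          mul_pos (by linarith) (by linarith)
        have e1 : gw * zr * fw = zr := by linear_combination zr * hfg
        have e2 : izr * zr * fw = fw := by linear_combination fw * hzi
        have hsum : fw + gw < zr + izr := by
          nlinarith only [key, e1, e2, mul_pos (by linarith only [hzpos] : (0:ℝ) < zr) hfwpos]
        have hr : (v : ℝ) < y := by
          have hvs : (v : ℝ) * s < (y : ℝ) * s := by linarith only [h2vs, h2ys, hsum]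
          exact (mul_lt_mul_iff_of_pos_right (by linarith only [hs1] : (0:ℝ) < s)).mp hvs
        exact_mod_cast hr
      obtain ⟨m, hmodd, hwm⟩ := ih u v hupos hvpos (by omega) hsolw
      refine ⟨m + 2, hmodd.add_even even_two, ?_⟩
      have hwε : (⟨u, v⟩ : ℤ√d) = w := rfl
      rw [hwε] at hwm
      have hcore : (star ε) * ε = (-1 : ℤ√d) := by
        have h := Zsqrtd.norm_eq_mul_conj ε
        rw [hnormε] at h
        rw [mul_comm, ← h]
        simp
      have hz : (⟨x, y⟩ : ℤ√d) = w * ε ^ 2 := by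
        rw [hw_def]
        have h4 : (⟨x, y⟩ : ℤ√d) * star ε ^ 2 * ε ^ 2 = ⟨x, y⟩ * ((star ε) * ε) ^ 2 := by ring
        rw [h4, hcore]
        ring
      rw [hz, hwm, pow_add]


end StormerAux

/-- Extension of Störmer's theorem for `x² - D y² = -1`: a positive solution
with `y = pⁿ y'`, `p` a prime not dividing `D`, and every prime divisor of `y'`
dividing `D`, is `ε` or `ε^q` for some odd prime `q` coprime to `p`, where `ε`
corresponds to the fundamental solution. -/
theorem stormer_neg_one_prime (D : ℤ) (hD : 0 < D) (hns : ¬ IsSquare D)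
    (x₁ y₁ : ℤ) (hx₁ : 0 < x₁) (hy₁ : 0 < y₁)
    (hsol₁ : x₁ ^ 2 - D * y₁ ^ 2 = -1)
    (hmin : ∀ u v : ℤ, 0 < u → 0 < v → u ^ 2 - D * v ^ 2 = -1 →
      (x₁ : ℝ) + (y₁ : ℝ) * Real.sqrt (D : ℝ) ≤ (u : ℝ) + (v : ℝ) * Real.sqrt (D : ℝ))
    (x y : ℤ) (hx : 0 < x) (hy : 0 < y)
    (hsol : x ^ 2 - D * y ^ 2 = -1)
    (p : ℕ) (hp : p.Prime) (hpD : ¬ (p : ℤ) ∣ D)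
    (n : ℕ) (hn : 0 < n) (y' : ℤ) (hyy : y = (p : ℤ) ^ n * y')
    (hdiv : ∀ q : ℕ, q.Prime → (q : ℤ) ∣ y' → (q : ℤ) ∣ D) :
    (x : ℝ) + (y : ℝ) * Real.sqrt (D : ℝ) =
        (x₁ : ℝ) + (y₁ : ℝ) * Real.sqrt (D : ℝ) ∨
      ∃ q : ℕ, q.Prime ∧ Odd q ∧ Nat.Coprime p q ∧
        (x : ℝ) + (y : ℝ) * Real.sqrt (D : ℝ) =
          ((x₁ : ℝ) + (y₁ : ℝ) * Real.sqrt (D : ℝ)) ^ q := by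
  have hD1 : D ≠ 1 := by rintro rfl; exact hns ⟨1, rfl⟩
  have hD2 : 2 ≤ D := by omega
  obtain ⟨m, hmodd, hzm⟩ := StormerAux.partA D hD2 hns x₁ y₁ hx₁ hy₁ hsol₁ hmin y.toNat x y hx hy
    le_rfl hsol
  set ε : ℤ√D := ⟨x₁, y₁⟩ with hε_def
  have hDR : (0:ℝ) ≤ (D:ℝ) := by exact_mod_cast hD.le
  have hss : Real.sqrt (D:ℝ) * Real.sqrt (D:ℝ) = ((D:ℤ):ℝ) := Real.mul_self_sqrt hDR
  let f : ℤ√D →+* ℝ := Zsqrtd.lift ⟨Real.sqrt (D:ℝ), hss⟩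
  have hf : ∀ z : ℤ√D, f z = (z.re : ℝ) + (z.im : ℝ) * Real.sqrt (D:ℝ) := fun _ => rfl
  have hfz : (x:ℝ) + (y:ℝ) * Real.sqrt (D:ℝ) = f (ε ^ m) := by
    rw [← hzm]
    exact (hf ⟨x, y⟩).symm
  have hfε : f ε = (x₁:ℝ) + (y₁:ℝ) * Real.sqrt (D:ℝ) := hf ε
  -- components positivity
  have hcomp : ∀ k : ℕ, 1 ≤ k → 1 ≤ (ε ^ k).re ∧ 1 ≤ (ε ^ k).im := by
    intro k hk
    induction k with
    | zero => omega
    | succ k ihk =>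
      rcases Nat.eq_or_lt_of_le hk with h | hk1
      · rw [← h, pow_one]
        exact ⟨hx₁, hy₁⟩
      · have ih := ihk (by omega)
        rw [pow_succ]
        constructor
        · rw [Zsqrtd.re_mul]
          have h1 : (ε ^ k).re * ε.re ≥ 1 := by
            have hre : ε.re = x₁ := rfl
            rw [hre]
            nlinarith only [ih.1, hx₁]
          have h2 : D * (ε ^ k).im * ε.im ≥ 0 :=
            mul_nonneg (mul_nonneg (by linarith only [hD2]) (by linarith only [ih.2]))
              (by linarith only [hy₁] : (0:ℤ) ≤ ε.im)
          linarith
        · rw [Zsqrtd.im_mul]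
          have h1 : (ε ^ k).re * ε.im ≥ 1 := by
            have him' : ε.im = y₁ := rfl
            rw [him']
            nlinarith only [ih.1, hy₁]
          have h2 : (ε ^ k).im * ε.re ≥ 0 :=
            mul_nonneg (by linarith only [ih.2]) (by linarith only [hx₁] : (0:ℤ) ≤ ε.re)
          linarith
  have hnormε : ε.norm = -1 := by
    show x₁ * x₁ - D * y₁ * y₁ = -1
    linear_combination hsol₁
  have hnormp : ∀ j : ℕ, (ε ^ j).norm = (ε.norm) ^ j := by
    intro j
    induction j with
    | zero => simp
    | succ j ihj => rw [pow_succ, pow_succ, Zsqrtd.norm_mul, ihj]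
  have hnorm_pow : ∀ k : ℕ, Odd k → (ε ^ k).re ^ 2 - D * (ε ^ k).im ^ 2 = -1 := by
    intro k hk
    have h1 : (ε ^ k).norm = -1 := by
      rw [hnormp k, hnormε, hk.neg_one_pow]
    rw [Zsqrtd.norm_def] at h1
    linear_combination h1
  have hm1 : 1 ≤ m := hmodd.pos
  -- prime divisor analysis helper
  have hydvd : ∀ r : ℕ, r.Prime → (r:ℤ) ∣ y → r = p ∨ (r:ℤ) ∣ D := by
    intro r hr hry
    rw [hyy] at hry
    rcases (Nat.prime_iff_prime_int.mp hr).dvd_mul.mp hry with h | h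
    · left
      have h1 : (r:ℤ) ∣ (p:ℤ) := (Nat.prime_iff_prime_int.mp hr).dvd_of_dvd_pow h
      exact (Nat.prime_dvd_prime_iff_eq hr hp).mp (Int.natCast_dvd_natCast.mp h1)
    · right; exact hdiv r hr h
  by_cases hm : m = 1
  · left
    rw [hfz, hm, pow_one, hfε]
  · right
    have hm3 : 2 ≤ m := by omega
    set q := m.minFac with hq_def
    have hqp : q.Prime := Nat.minFac_prime (by omega)
    have hqdvd : q ∣ m := Nat.minFac_dvd m
    set a := m / q with ha_def
    have ham : a * q = m := Nat.div_mul_cancel hqdvd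
    have hq2 : 2 ≤ q := hqp.two_le
    have hapos : 1 ≤ a := by
      rcases Nat.eq_zero_or_pos a with h | h
      · rw [h] at ham; omega
      · exact h
    have haq_odd : Odd (a * q) := ham ▸ hmodd
    obtain ⟨haodd, hqodd⟩ := Nat.odd_mul.mp haq_odd
    obtain ⟨i, hi⟩ := hqodd
    have hi' : q = 2 * i + 1 := by omega
    have hi1 : 1 ≤ i := by omega
    have hAB := hcomp a hapos
    have hsolA : (ε ^ a).re ^ 2 - D * (ε ^ a).im ^ 2 = -1 := hnorm_pow a haodd
    obtain ⟨σ, c, hc, him, hid⟩ := StormerAux.sigma_id D (by omega) q hqp i hi' (ε ^ a).re (ε ^ a).im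
      (by linarith [hAB.1]) hAB.2
    have hwq : (⟨(ε ^ a).re, (ε ^ a).im⟩ : ℤ√D) = ε ^ a := rfl
    have hym : y = (ε ^ a).im * σ := by
      have h1 : (ε ^ m).im = (ε ^ a).im * σ := by
        rw [← ham, pow_mul, ← hwq]
        exact him
      rw [← h1]
      exact congrArg Zsqrtd.im hzm
    have hσprimes : ∀ r : ℕ, r.Prime → (r:ℤ) ∣ σ → r = p ∨ (r:ℤ) ∣ D := by
      intro r hr hrσ
      exact hydvd r hr (hym ▸ hrσ.mul_left _)
    obtain ⟨hpσ, hpB, hqnep⟩ := StormerAux.lemQ D hD2 p hp hpD q hqp i hi' hi1 (ε ^ a).re (ε ^ a).im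
      hAB.1 hAB.2 hsolA σ c hc hid hσprimes
    by_cases ha1 : a = 1
    · refine ⟨q, hqp, ⟨i, by omega⟩, (Nat.coprime_primes hp hqp).mpr (Ne.symm hqnep), ?_⟩
      rw [hfz, show m = q by rw [← ham, ha1, one_mul], map_pow, hfε]
    · exfalso
      set q' := a.minFac with hq'_def
      have hq'p : q'.Prime := Nat.minFac_prime ha1
      have hq'dvd : q' ∣ a := Nat.minFac_dvd a
      set b := a / q' with hb_def
      have hba : b * q' = a := Nat.div_mul_cancel hq'dvd
      have hbpos : 1 ≤ b := by
        rcases Nat.eq_zero_or_pos b with h | h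
        · rw [h] at hba; omega
        · exact h
      have hbq_odd : Odd (b * q') := hba ▸ haodd
      obtain ⟨hbodd, hq'odd⟩ := Nat.odd_mul.mp hbq_odd
      obtain ⟨i', hii'⟩ := hq'odd
      have hi'' : q' = 2 * i' + 1 := by omega
      have hi'1 : 1 ≤ i' := by have := hq'p.two_le; omega
      have hAB₂ := hcomp b hbpos
      have hsolB : (ε ^ b).re ^ 2 - D * (ε ^ b).im ^ 2 = -1 := hnorm_pow b hbodd
      obtain ⟨σ₂, c₂, hc₂, him₂, hid₂⟩ := StormerAux.sigma_id D (by omega) q' hq'p i' hi''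
        (ε ^ b).re (ε ^ b).im (by linarith [hAB₂.1]) hAB₂.2
      have hwq₂ : (⟨(ε ^ b).re, (ε ^ b).im⟩ : ℤ√D) = ε ^ b := rfl
      have hB_eq : (ε ^ a).im = (ε ^ b).im * σ₂ := by
        rw [← hba, pow_mul, ← hwq₂]
        exact him₂
      have hσ₂primes : ∀ r : ℕ, r.Prime → (r:ℤ) ∣ σ₂ → r = p ∨ (r:ℤ) ∣ D := by
        intro r hr hrσ
        refine hydvd r hr ?_
        rw [hym, hB_eq]
        exact (hrσ.mul_left _).mul_right _
      obtain ⟨hpσ₂, _, _⟩ := StormerAux.lemQ D hD2 p hp hpD q' hq'p i' hi'' hi'1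
        (ε ^ b).re (ε ^ b).im hAB₂.1 hAB₂.2 hsolB σ₂ c₂ hc₂ hid₂ hσ₂primes
      exact hpB (by rw [hB_eq]; exact hpσ₂.mul_left _)
end

section
/- Let D be a positive nonsquare integer such that x² − D y² = 4 is solvable in odd positive integers x and y. Let (x, y) be a positive integer solution of x² − D y² = 4 with y = pⁿ y′, where p is a prime not dividing D and n is a positive integer. If every prime divisor of y′ divides D, then (x + y√D)/2 = ε/2, or (ε/2)², or (ε/2)³, except in the case (x, y, D) = (123, 55, 5); here ε = x₁ + y₁√D and (x₁, y₁) is the minimal positive solution of x² − D y² = 4. -/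
namespace StormerAux

def lucasU (P : ℤ) : ℕ → ℤ
  | 0 => 0
  | 1 => 1
  | (n+2) => P * lucasU P (n+1) - lucasU P n

def lucasV (P : ℤ) : ℕ → ℤ
  | 0 => 2
  | 1 => P
  | (n+2) => P * lucasV P (n+1) - lucasV P n

@[simp] lemma lucasU_zero (P : ℤ) : lucasU P 0 = 0 := rfl
@[simp] lemma lucasU_one (P : ℤ) : lucasU P 1 = 1 := rfl
lemma lucasU_add_two (P : ℤ) (n : ℕ) :
    lucasU P (n+2) = P * lucasU P (n+1) - lucasU P n := rfl
@[simp] lemma lucasV_zero (P : ℤ) : lucasV P 0 = 2 := rfl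
@[simp] lemma lucasV_one (P : ℤ) : lucasV P 1 = P := rfl
lemma lucasV_add_two (P : ℤ) (n : ℕ) :
    lucasV P (n+2) = P * lucasV P (n+1) - lucasV P n := rfl

@[simp] lemma lucasU_two (P : ℤ) : lucasU P 2 = P := by
  simp [lucasU_add_two]
@[simp] lemma lucasV_two (P : ℤ) : lucasV P 2 = P^2 - 2 := by
  simp [lucasV_add_two]; ring

/-- sequences vanishing twice with the Lucas recurrence vanish identically -/
lemma lucas_zero_of (P : ℤ) (f : ℕ → ℤ) (h0 : f 0 = 0) (h1 : f 1 = 0)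
    (hrec : ∀ n, f (n+2) = P * f (n+1) - f n) : ∀ n, f n = 0 := by
  intro n
  induction n using Nat.twoStepInduction with
  | zero => exact h0
  | one => exact h1
  | more n ih1 ih2 => rw [hrec, ih1, ih2]; ring

lemma i0a (P : ℤ) (j : ℕ) :
    P * lucasV P j + (P^2-4) * lucasU P j = 2 * lucasV P (j+1) := by
  have := lucas_zero_of P
    (fun j => P * lucasV P j + (P^2-4) * lucasU P j - 2 * lucasV P (j+1))
    (by simp; try ring) (by simp [lucasV_add_two, lucasU_add_two]; try ring)
    (fun n => by simp only [lucasU_add_two, lucasV_add_two]; ring) j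
  linarith [this]

lemma i0b (P : ℤ) (j : ℕ) :
    lucasV P j + P * lucasU P j = 2 * lucasU P (j+1) := by
  have := lucas_zero_of P
    (fun j => lucasV P j + P * lucasU P j - 2 * lucasU P (j+1))
    (by simp; try ring) (by simp [lucasU_add_two, lucasV_add_two]; try ring)
    (fun n => by simp only [lucasU_add_two, lucasV_add_two]; ring) j
  linarith [this]

/-- norm identity -/
lemma i1 (P : ℤ) (j : ℕ) : lucasV P j ^ 2 - (P^2-4) * lucasU P j ^ 2 = 4 := by
  have key : ∀ j : ℕ, (lucasV P j ^ 2 - (P^2-4) * lucasU P j ^ 2 = 4) ∧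
      (lucasV P (j+1) ^ 2 - (P^2-4) * lucasU P (j+1) ^ 2 = 4) ∧
      (lucasV P (j+1) * lucasV P j - (P^2-4) * lucasU P (j+1) * lucasU P j = 2*P) := by
    intro j
    induction j with
    | zero => refine ⟨by simp; try ring, by simp [lucasU_add_two, lucasV_add_two]; try ring, by simp; try ring⟩
    | succ n ih =>
      obtain ⟨h1, h2, h3⟩ := ih
      refine ⟨h2, ?_, ?_⟩
      · simp only [lucasU_add_two, lucasV_add_two]
        linear_combination P^2 * h2 + h1 - 2*P*h3
      · simp only [lucasU_add_two, lucasV_add_two]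
        linear_combination P * h2 - h3
  exact (key j).1

/-- addition formula -/
lemma lucas_add (P : ℤ) (m n : ℕ) :
    lucasU P (m+n+1) = lucasU P (m+1) * lucasU P (n+1) - lucasU P m * lucasU P n := by
  induction m using Nat.twoStepInduction with
  | zero => simp
  | one =>
    have e : 1 + n + 1 = n + 2 := by omega
    rw [e, lucasU_add_two]
    simp [lucasU_add_two]
    try ring
  | more m ih1 ih2 =>
    have e1 : m + 2 + n + 1 = (m + n + 1) + 2 := by omega
    have e2 : m + 1 + n + 1 = (m + n + 1) + 1 := by omega
    rw [e1, lucasU_add_two]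
    rw [e2] at ih2
    have e3 : m + n + 1 + 1 = m + 1 + n + 1 := by omega
    rw [ih1, ih2, lucasU_add_two (n := m+1), lucasU_add_two (n := m)]
    ring

/-- V in terms of U -/
lemma lucasV_eq (P : ℤ) (k : ℕ) : lucasV P (k+1) = lucasU P (k+2) - lucasU P k := by
  induction k using Nat.twoStepInduction with
  | zero => simp [lucasU_add_two]
  | one => simp [lucasU_add_two, lucasV_add_two]; ring
  | more k ih1 ih2 =>
    rw [lucasV_add_two, ih1, ih2, lucasU_add_two (n := k+2), lucasU_add_two (n := k+1)]
    linear_combination lucasU_add_two P k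

/-- Catalan-type identity -/
lemma i5 (P : ℤ) (j : ℕ) : lucasU P (j+2) * lucasU P j = lucasU P (j+1)^2 - 1 := by
  induction j with
  | zero => simp
  | succ n ih =>
    rw [lucasU_add_two (n := n+1)]
    linear_combination ih - lucasU P (n+2) * lucasU_add_two P n

lemma i4 (P : ℤ) (k : ℕ) :
    lucasU P (2*k+1) = lucasU P (k+1)^2 - lucasU P k^2 := by
  have := lucas_add P k k
  have e : k + k + 1 = 2*k+1 := by omega
  rw [e] at this
  rw [this]; ring

lemma U_two_mul (P : ℤ) (k : ℕ) : lucasU P (2*k) = lucasU P k * lucasV P k := by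
  cases k with
  | zero => simp
  | succ j =>
    have h := lucas_add P (j+1) j
    have e : j + 1 + j + 1 = 2*(j+1) := by omega
    rw [e] at h
    rw [h, lucasV_eq]
    ring

/-- stepping identity: U (n+2k) = V k * U (n+k) - U n -/
lemma E_id (P : ℤ) (k n : ℕ) :
    lucasU P (n + 2*k) = lucasV P k * lucasU P (n + k) - lucasU P n := by
  cases k with
  | zero => simp; ring
  | succ j =>
    have base0 : lucasU P (0 + 2*(j+1)) = lucasV P (j+1) * lucasU P (0 + (j+1)) - lucasU P 0 := by
      simpa [mul_comm] using U_two_mul P (j+1)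
    have base1 : lucasU P (1 + 2*(j+1)) = lucasV P (j+1) * lucasU P (1 + (j+1)) - lucasU P 1 := by
      have e : 1 + 2*(j+1) = 2*(j+1)+1 := by omega
      rw [e, i4, lucasV_eq]
      have h5 := i5 P j
      have e2 : 1 + (j+1) = j + 2 := by omega
      rw [e2]
      simp only [lucasU_one]
      linear_combination h5
    have := lucas_zero_of P
      (fun n => lucasU P (n + 2*(j+1)) - (lucasV P (j+1) * lucasU P (n + (j+1)) - lucasU P n))
      (by rw [sub_eq_zero]; exact base0) (by rw [sub_eq_zero]; exact base1)
      (fun n => by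
        have e1 : n + 2 + 2*(j+1) = (n + 2*(j+1)) + 2 := by omega
        have e2 : n + 1 + 2*(j+1) = (n + 2*(j+1)) + 1 := by omega
        have e3 : n + 2 + (j+1) = (n + (j+1)) + 2 := by omega
        have e4 : n + 1 + (j+1) = (n + (j+1)) + 1 := by omega
        simp only [e1, e2, e3, e4, lucasU_add_two]
        ring) n
    linarith [this]

/-- multiplicativity: U(a*b) = U a * (U-sequence over V a at b) -/
lemma i6 (P : ℤ) (a b : ℕ) :
    lucasU P (a*b) = lucasU P a * lucasU (lucasV P a) b := by
  induction b using Nat.twoStepInduction with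
  | zero => simp
  | one => simp
  | more b ih1 ih2 =>
    have e : a * (b+2) = a*b + 2*a := by ring
    rw [e, E_id, lucasU_add_two]
    have e2 : a*b + a = a*(b+1) := by ring
    rw [e2, ih1, ih2]
    ring

lemma V_two_mul (P : ℤ) (k : ℕ) : lucasV P (2*k) = lucasV P k ^2 - 2 := by
  cases k with
  | zero => norm_num
  | succ j =>
    have e : 2*(j+1) = (2*j+1) + 1 := by omega
    rw [e, lucasV_eq]
    have e2 : 2*j+1+2 = 2*(j+1)+1 := by omega
    rw [e2, i4, i4, lucasV_eq]
    have h5 := i5 P j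
    linear_combination 2 * h5

lemma P_dvd_V_odd (P : ℤ) (i : ℕ) : P ∣ lucasV P (2*i+1) := by
  induction i with
  | zero => simp
  | succ n ih =>
    have e : 2*(n+1)+1 = (2*n+1) + 2 := by omega
    rw [e, lucasV_add_two]
    exact dvd_sub (Dvd.intro _ rfl) ih


section Growth

lemma U_pos_mono (P : ℤ) (hP : 3 ≤ P) :
    ∀ j, 0 ≤ lucasU P j ∧ lucasU P j < lucasU P (j+1) := by
  intro j
  induction j with
  | zero => simp
  | succ n ih =>
    obtain ⟨h0, h1⟩ := ih
    constructor
    · linarith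
    · rw [lucasU_add_two]
      nlinarith

lemma U_one_le (P : ℤ) (hP : 3 ≤ P) (j : ℕ) : 1 ≤ lucasU P (j+1) := by
  have := U_pos_mono P hP j
  omega

lemma U_pos_nat (P : ℤ) (hP : 3 ≤ P) (j : ℕ) (hj : 1 ≤ j) : 1 ≤ lucasU P j := by
  obtain ⟨i, rfl⟩ : ∃ i, j = i + 1 := ⟨j - 1, by omega⟩
  exact U_one_le P hP i

lemma U_natAbs_ne (P : ℤ) (hP : 3 ≤ P) (j : ℕ) (hj : 1 ≤ j) : (lucasU P j).natAbs ≠ 0 := by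
  have := U_pos_nat P hP j hj
  omega

lemma V_pos_mono (P : ℤ) (hP : 3 ≤ P) :
    ∀ j, 2 ≤ lucasV P j ∧ lucasV P j < lucasV P (j+1) := by
  intro j
  induction j with
  | zero => constructor <;> simp <;> linarith
  | succ n ih =>
    obtain ⟨h0, h1⟩ := ih
    constructor
    · linarith
    · rw [lucasV_add_two]
      nlinarith

lemma V_ge_three (P : ℤ) (hP : 3 ≤ P) (j : ℕ) (hj : 1 ≤ j) : 3 ≤ lucasV P j := by
  obtain ⟨i, rfl⟩ : ∃ i, j = i + 1 := ⟨j - 1, by omega⟩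
  induction i with
  | zero => simpa using hP
  | succ n ih =>
    have h := V_pos_mono P hP (n+1)
    have h2 := ih (by omega)
    omega

lemma Ugrow (P : ℤ) (hP : 3 ≤ P) (j : ℕ) :
    (P - 1) * lucasU P (j+1) ≤ lucasU P (j+2) := by
  have h := U_pos_mono P hP j
  rw [lucasU_add_two]
  nlinarith [h.1, h.2]

lemma Upow (P : ℤ) (hP : 3 ≤ P) (t j : ℕ) :
    (P-1)^t * lucasU P (j+1) ≤ lucasU P (j+1+t) := by
  induction t with
  | zero => simp
  | succ n ih =>
    have h1 : (P-1)^(n+1) * lucasU P (j+1) = (P-1) * ((P-1)^n * lucasU P (j+1)) := by ring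
    rw [h1]
    have h2 : (P-1) * ((P-1)^n * lucasU P (j+1)) ≤ (P-1) * lucasU P (j+1+n) := by
      apply mul_le_mul_of_nonneg_left ih (by linarith)
    refine le_trans h2 ?_
    have e : j + 1 + (n+1) = (j + n) + 2 := by omega
    have e2 : j + 1 + n = (j+n) + 1 := by omega
    rw [e, e2]
    exact Ugrow P hP (j+n)

lemma G1 (P : ℤ) (hP : 3 ≤ P) (k : ℕ) (hk : 2 ≤ k) : (k:ℤ) < lucasU P k := by
  induction k, hk using Nat.le_induction with
  | base => simp only [lucasU_two]; push_cast; linarith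
  | succ n hn ih =>
    have hg : (P-1) * lucasU P n ≤ lucasU P (n+1) := by
      obtain ⟨i, rfl⟩ : ∃ i, n = i + 1 := ⟨n - 1, by omega⟩
      exact Ugrow P hP i
    have h1 : 1 ≤ lucasU P n := U_pos_nat P hP n (by omega)
    push_cast
    push_cast at ih
    nlinarith

lemma G2 (P : ℤ) (hP : 3 ≤ P) (k : ℕ) (hk : 2 ≤ k) :
    (2*(k:ℤ)+1) < lucasU P (k+1) + lucasU P k := by
  induction k, hk using Nat.le_induction with
  | base =>
    have e3 : lucasU P 3 = P^2 - 1 := by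
      rw [show (3:ℕ) = 1 + 2 by rfl, lucasU_add_two]
      simp; ring
    rw [e3]
    simp only [lucasU_two]
    push_cast
    nlinarith
  | succ n hn ih =>
    have hg : (P-1) * lucasU P (n+1) ≤ lucasU P (n+2) := Ugrow P hP n
    have h1 : 1 ≤ lucasU P (n+1) := U_one_le P hP n
    have h0 : 0 ≤ lucasU P n := (U_pos_mono P hP n).1
    have hmono : lucasU P n < lucasU P (n+1) := (U_pos_mono P hP n).2
    push_cast
    push_cast at ih
    nlinarith

lemma G3aux (P : ℤ) (hP : 4 ≤ P) (k : ℕ) (hk : 2 ≤ k) :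
    (2*(k:ℤ)+1) < lucasU P (k+1) - lucasU P k := by
  have hP3 : (3:ℤ) ≤ P := by linarith
  induction k, hk using Nat.le_induction with
  | base =>
    have e3 : lucasU P 3 = P^2 - 1 := by
      rw [show (3:ℕ) = 1 + 2 by rfl, lucasU_add_two]
      simp; ring
    rw [e3]
    simp only [lucasU_two]
    push_cast
    nlinarith
  | succ n hn ih =>
    have h1 : 1 ≤ lucasU P (n+1) := U_one_le P hP3 n
    have h0 : 0 ≤ lucasU P n := (U_pos_mono P hP3 n).1
    have hmono : lucasU P n < lucasU P (n+1) := (U_pos_mono P hP3 n).2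
    rw [lucasU_add_two]
    push_cast
    push_cast at ih
    nlinarith

lemma G3aux3 (k : ℕ) (hk : 3 ≤ k) :
    (2*(k:ℤ)+1) < lucasU 3 (k+1) - lucasU 3 k := by
  have hP3 : (3:ℤ) ≤ 3 := le_refl _
  induction k, hk using Nat.le_induction with
  | base =>
    have e3 : lucasU 3 3 = 8 := by
      rw [show (3:ℕ) = 1 + 2 by rfl, lucasU_add_two]
      simp
    have e4 : lucasU 3 4 = 21 := by
      rw [show (4:ℕ) = 2 + 2 by rfl, lucasU_add_two, e3]
      simp
    rw [e3, e4]
    norm_num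
  | succ n hn ih =>
    have h1 : 1 ≤ lucasU 3 (n+1) := U_one_le 3 hP3 n
    have h0 : 0 ≤ lucasU 3 n := (U_pos_mono 3 hP3 n).1
    have hmono : lucasU 3 n < lucasU 3 (n+1) := (U_pos_mono 3 hP3 n).2
    rw [lucasU_add_two]
    push_cast
    push_cast at ih
    nlinarith

lemma G3 (P : ℤ) (hP : 3 ≤ P) (k : ℕ) (hk : 2 ≤ k)
    (h : lucasU P (k+1) - lucasU P k ≤ 2*(k:ℤ)+1) : k = 2 ∧ P = 3 := by
  have hP3 : P = 3 := by
    by_contra hne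
    have h4 : 4 ≤ P := by omega
    have := G3aux P h4 k hk
    linarith
  subst hP3
  refine ⟨?_, rfl⟩
  by_contra hne
  have h3 : 3 ≤ k := by omega
  have := G3aux3 k h3
  linarith

end Growth

section Parity

lemma U_parity (P : ℤ) (hPodd : Odd P) :
    ∀ i, Even (lucasU P (3*i)) ∧ Odd (lucasU P (3*i+1)) ∧ Odd (lucasU P (3*i+2)) := by
  intro i
  induction i with
  | zero =>
    refine ⟨by simp, by simp, ?_⟩
    simpa using hPodd
  | succ n ih =>
    obtain ⟨h0, h1, h2⟩ := ih
    have k0 : Even (lucasU P (3*(n+1))) := by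
      rw [show 3*(n+1) = (3*n+1) + 2 by omega, lucasU_add_two]
      rw [show 3*n+1+1 = 3*n+2 by omega]
      exact (hPodd.mul h2).sub_odd h1
    have k1 : Odd (lucasU P (3*(n+1)+1)) := by
      rw [show 3*(n+1)+1 = (3*n+2) + 2 by omega, lucasU_add_two]
      rw [show 3*n+2+1 = 3*(n+1) by omega]
      exact (k0.mul_left P).sub_odd h2
    have k2 : Odd (lucasU P (3*(n+1)+2)) := by
      rw [show 3*(n+1)+2 = (3*(n+1)) + 2 by omega, lucasU_add_two]
      rw [show 3*(n+1)+1 = (3*n+2) + 2 by omega]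
      rw [show (3*n+2)+2 = 3*(n+1)+1 by omega]
      exact (hPodd.mul k1).sub_even k0
    exact ⟨k0, k1, k2⟩

lemma two_dvd_U_iff (P : ℤ) (hPodd : Odd P) (m : ℕ) :
    (2:ℤ) ∣ lucasU P m ↔ 3 ∣ m := by
  obtain ⟨q, r, hr, rfl⟩ : ∃ q r, r < 3 ∧ m = 3*q + r :=
    ⟨m / 3, m % 3, Nat.mod_lt _ (by norm_num), by omega⟩
  have h := U_parity P hPodd q
  interval_cases r
  · simp only [Nat.add_zero]
    constructor
    · intro _; omega
    · intro _
      obtain ⟨c, hc⟩ := h.1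
      exact ⟨c, by omega⟩
  · constructor
    · intro he
      obtain ⟨d, hd⟩ := he
      obtain ⟨c, hc⟩ := h.2.1
      omega
    · intro hd; omega
  · constructor
    · intro he
      obtain ⟨d, hd⟩ := he
      obtain ⟨c, hc⟩ := h.2.2
      omega
    · intro hd; omega

lemma W_odd_of_even (Q : ℤ) (hQ : Even Q) : ∀ i, Odd (lucasU Q (2*i+1)) := by
  intro i
  induction i with
  | zero => simp
  | succ n ih =>
    rw [show 2*(n+1)+1 = (2*n+1) + 2 by omega, lucasU_add_two]
    rw [show 2*n+1+1 = 2*n+2 by omega]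
    exact ((hQ.mul_right _).sub_odd ih)

end Parity

section ABPair

def abSeq (P : ℤ) : ℕ → ℤ × ℤ
  | 0 => (1, 0)
  | (j+1) => (P * (abSeq P j).1 + (P^2-4) * (abSeq P j).2,
              (abSeq P j).1 + P * (abSeq P j).2)

lemma abSeq_spec (P : ℤ) : ∀ j, (abSeq P (j+1)).1 = 2^j * lucasV P (j+1) ∧
    (abSeq P (j+1)).2 = 2^j * lucasU P (j+1) := by
  intro j
  induction j with
  | zero => simp [abSeq]
  | succ n ih =>
    obtain ⟨h1, h2⟩ := ih
    constructor
    · show P * (abSeq P (n+1)).1 + (P^2-4) * (abSeq P (n+1)).2 = _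
      rw [h1, h2]
      have h := i0a P (n+1)
      have e : (2:ℤ)^(n+1) = 2^n * 2 := by ring
      rw [e]
      linear_combination (2:ℤ)^n * h
    · show (abSeq P (n+1)).1 + P * (abSeq P (n+1)).2 = _
      rw [h1, h2]
      have h := i0b P (n+1)
      have e : (2:ℤ)^(n+1) = 2^n * 2 := by ring
      rw [e]
      linear_combination (2:ℤ)^n * h

lemma abSeq_cong (P : ℤ) : ∀ j, ∃ u t : ℤ,
    (abSeq P (j+1)).1 = P^(j+1) + (P^2-4) * u ∧
    (abSeq P (j+1)).2 = ((j:ℤ)+1) * P^j + (P^2-4) * t := by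
  intro j
  induction j with
  | zero => exact ⟨0, 0, by simp [abSeq], by simp [abSeq]⟩
  | succ n ih =>
    obtain ⟨u, t, h1, h2⟩ := ih
    refine ⟨P * u + (((n:ℤ))+1) * P^n + (P^2-4)*t, u + P*t, ?_, ?_⟩
    · show P * (abSeq P (n+1)).1 + (P^2-4) * (abSeq P (n+1)).2 = _
      rw [h1, h2]
      push_cast
      ring
    · show (abSeq P (n+1)).1 + P * (abSeq P (n+1)).2 = _
      rw [h1, h2]
      push_cast
      ring

lemma CONG (P : ℤ) (j : ℕ) : ∃ t : ℤ,
    2^j * lucasU P (j+1) = ((j:ℤ)+1) * P^j + (P^2-4) * t := by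
  obtain ⟨u, t, _, h2⟩ := abSeq_cong P j
  exact ⟨t, by rw [← (abSeq_spec P j).2]; exact h2⟩

lemma abSeq_cong2 (P : ℤ) : ∀ j, ∃ u t : ℤ,
    (abSeq P (j+3)).1 = P^(j+3) + (((j+3).choose 2 : ℕ) : ℤ) * P^(j+1) * (P^2-4) + (P^2-4)^2 * u ∧
    (abSeq P (j+3)).2 = ((j:ℤ)+3) * P^(j+2) + (((j+3).choose 3 : ℕ) : ℤ) * P^j * (P^2-4) + (P^2-4)^2 * t := by
  intro j
  induction j with
  | zero =>
    refine ⟨0, 0, ?_, ?_⟩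
    · show P * (abSeq P 2).1 + (P^2-4) * (abSeq P 2).2 = _
      show P * (P * (abSeq P 1).1 + (P^2-4) * (abSeq P 1).2) + (P^2-4) * ((abSeq P 1).1 + P * (abSeq P 1).2) = _
      show P * (P * (P * (abSeq P 0).1 + (P^2-4) * (abSeq P 0).2) + (P^2-4) * ((abSeq P 0).1 + P * (abSeq P 0).2)) + (P^2-4) * ((P * (abSeq P 0).1 + (P^2-4) * (abSeq P 0).2) + P * ((abSeq P 0).1 + P * (abSeq P 0).2)) = _
      show P * (P * (P * 1 + (P^2-4) * 0) + (P^2-4) * (1 + P * 0)) + (P^2-4) * ((P * 1 + (P^2-4) * 0) + P * (1 + P * 0)) = _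
      norm_num
      ring
    · show (abSeq P 2).1 + P * (abSeq P 2).2 = _
      show (P * (abSeq P 1).1 + (P^2-4) * (abSeq P 1).2) + P * ((abSeq P 1).1 + P * (abSeq P 1).2) = _
      show (P * (P * 1 + (P^2-4) * 0) + (P^2-4) * (1 + P * 0)) + P * ((P * 1 + (P^2-4) * 0) + P * (1 + P * 0)) = _
      norm_num
      ring
  | succ n ih =>
    obtain ⟨u, t, h1, h2⟩ := ih
    have pas2 : (((n+4).choose 2 : ℕ) : ℤ) = ((n:ℤ)+3) + (((n+3).choose 2 : ℕ) : ℤ) := by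
      have h : (n+4).choose 2 = (n+3).choose 1 + (n+3).choose 2 := Nat.choose_succ_succ (n+3) 1
      rw [h, Nat.choose_one_right]
      push_cast
      ring
    have pas3 : (((n+4).choose 3 : ℕ) : ℤ) = (((n+3).choose 2 : ℕ) : ℤ) + (((n+3).choose 3 : ℕ) : ℤ) := by
      have h : (n+4).choose 3 = (n+3).choose 2 + (n+3).choose 3 := Nat.choose_succ_succ (n+3) 2
      rw [h]
      push_cast
      ring
    refine ⟨P*u + (((n+3).choose 3 : ℕ) : ℤ) * P^n + (P^2-4)*t, u + P*t, ?_, ?_⟩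
    · show P * (abSeq P (n+3)).1 + (P^2-4) * (abSeq P (n+3)).2 = _
      rw [h1, h2, show ((n:ℕ)+1+3 : ℕ) = n+4 by omega, pas2]
      push_cast
      ring
    · show (abSeq P (n+3)).1 + P * (abSeq P (n+3)).2 = _
      rw [h1, h2, show ((n:ℕ)+1+3 : ℕ) = n+4 by omega, pas3]
      push_cast
      ring

lemma CONG2 (P : ℤ) (j : ℕ) : ∃ t : ℤ,
    2^(j+2) * lucasU P (j+3) = ((j:ℤ)+3) * P^(j+2) + (((j+3).choose 3 : ℕ) : ℤ) * P^j * (P^2-4) + (P^2-4)^2 * t := by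
  obtain ⟨u, t, _, h2⟩ := abSeq_cong2 P j
  refine ⟨t, ?_⟩
  have h := (abSeq_spec P (j+2)).2
  rw [show (j+2)+1 = j+3 by omega] at h
  rw [← h]
  exact h2

end ABPair


section Valuation

lemma int_pow_dvd_iff (q e : ℕ) (z : ℤ) : ((q:ℤ))^e ∣ z ↔ q^e ∣ z.natAbs := by
  rw [show ((q:ℤ))^e = ((q^e : ℕ) : ℤ) by push_cast; ring, Int.natCast_dvd]

lemma int_dvd_iff (q : ℕ) (z : ℤ) : ((q:ℤ)) ∣ z ↔ q ∣ z.natAbs := Int.natCast_dvd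

lemma q_not_dvd_P (q : ℕ) (hq : q.Prime) (hq2 : q ≠ 2) (P : ℤ)
    (hqΔ : (q:ℤ) ∣ P^2 - 4) : ¬ (q:ℤ) ∣ P := by
  intro h
  have h4 : (q:ℤ) ∣ 4 := by
    have hp2 : (q:ℤ) ∣ P^2 := dvd_pow h two_ne_zero
    have := dvd_sub hp2 hqΔ
    simpa using this
  have h44 : q ∣ 4 := by
    rw [show (4:ℤ) = ((4:ℕ):ℤ) by norm_num] at h4
    exact_mod_cast h4
  have : q ∣ 2 := hq.dvd_of_dvd_pow (show q ∣ 2^2 by norm_num; exact h44)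
  exact hq2 ((Nat.prime_dvd_prime_iff_eq hq Nat.prime_two).mp this)

/-- if q ∤ index (q odd, q | Δ) then q ∤ U -/
lemma q_not_dvd_U (q : ℕ) (hq : q.Prime) (hq2 : q ≠ 2) (P : ℤ)
    (hqΔ : (q:ℤ) ∣ P^2 - 4) (s : ℕ) (hs : 1 ≤ s) (hqs : ¬ q ∣ s) :
    ¬ (q:ℤ) ∣ lucasU P s := by
  intro hu
  obtain ⟨j, rfl⟩ : ∃ j, s = j + 1 := ⟨s-1, by omega⟩
  obtain ⟨t, ht⟩ := CONG P j
  have h1 : (q:ℤ) ∣ ((j:ℤ)+1) * P^j := by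
    have h2 : (q:ℤ) ∣ 2^j * lucasU P (j+1) := Dvd.dvd.mul_left hu _
    rw [ht] at h2
    have h3 : (q:ℤ) ∣ (P^2-4)*t := hqΔ.mul_right t
    have := dvd_sub h2 h3
    simpa using this
  rcases Int.Prime.dvd_mul' hq h1 with h|h
  · have : q ∣ j+1 := by exact_mod_cast h
    exact hqs this
  · exact q_not_dvd_P q hq hq2 P hqΔ (Int.Prime.dvd_pow' hq h)

/-- index-divisibility: q | U_m → q | m for odd q | Δ -/
lemma q_dvd_index (q : ℕ) (hq : q.Prime) (hq2 : q ≠ 2) (P : ℤ)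
    (hqΔ : (q:ℤ) ∣ P^2 - 4) (s : ℕ) (hs : 1 ≤ s) (hu : (q:ℤ) ∣ lucasU P s) :
    q ∣ s := by
  by_contra hqs
  exact q_not_dvd_U q hq hq2 P hqΔ s hs hqs hu

/-- exactly one factor of q in U_q when q² | Δ (any odd prime q) -/
lemma val_Uq_one_of_sq (q : ℕ) (hq : q.Prime) (hq2 : q ≠ 2) (P : ℤ)
    (hΔ : ((q:ℤ))^2 ∣ P^2-4) :
    (q:ℤ) ∣ lucasU P q ∧ ¬ ((q:ℤ))^2 ∣ lucasU P q := by
  have hqΔ : (q:ℤ) ∣ P^2 - 4 := dvd_trans (dvd_pow_self _ two_ne_zero) hΔ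
  have hq1 := hq.one_lt
  obtain ⟨j, hj⟩ : ∃ j, q = j + 1 := ⟨q-1, by omega⟩
  obtain ⟨t, ht⟩ := CONG P j
  have hjq : ((j:ℤ)+1) = (q:ℤ) := by rw [hj]; push_cast; ring
  constructor
  · have h2 : (q:ℤ) ∣ 2^j * lucasU P (j+1) := by
      rw [ht, hjq]
      exact dvd_add (Dvd.intro _ rfl) (hqΔ.mul_right t)
    rw [← hj] at h2
    rcases Int.Prime.dvd_mul' hq h2 with h|h
    · exfalso
      have h2' : q ∣ 2 := by
        have := Int.Prime.dvd_pow' hq h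
        exact_mod_cast this
      exact hq2 ((Nat.prime_dvd_prime_iff_eq hq Nat.prime_two).mp h2')
    · exact h
  · intro hsq
    have h2 : ((q:ℤ))^2 ∣ 2^j * lucasU P (j+1) := by
      rw [← hj]; exact hsq.mul_left _
    rw [ht, hjq] at h2
    have h3 : ((q:ℤ))^2 ∣ (P^2-4)*t := hΔ.mul_right t
    have h4 : ((q:ℤ))^2 ∣ (q:ℤ) * P^j := by
      have := dvd_sub h2 h3
      simpa using this
    have h5 : (q:ℤ) ∣ P^j := by
      have hq0 : (q:ℤ) ≠ 0 := by exact_mod_cast hq.ne_zero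
      rcases h4 with ⟨c, hc⟩
      refine ⟨c, ?_⟩
      have : (q:ℤ) * P^j = (q:ℤ) * ((q:ℤ)*c) := by rw [hc]; ring
      exact mul_left_cancel₀ hq0 this
    have hj0 : j ≠ 0 := by
      intro h0
      rw [h0] at h5
      simp at h5
      have := hq.one_lt
      omega
    exact q_not_dvd_P q hq hq2 P hqΔ (Int.Prime.dvd_pow' hq h5)

lemma fact_one_of (q : ℕ) (hq : q.Prime) (z : ℤ) (hz : z ≠ 0)
    (h1 : (q:ℤ) ∣ z) (h2 : ¬ ((q:ℤ))^2 ∣ z) : (z.natAbs).factorization q = 1 := by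
  have hz' : z.natAbs ≠ 0 := by simpa using hz
  have k1 : 1 ≤ (z.natAbs).factorization q := by
    rw [← hq.pow_dvd_iff_le_factorization hz', pow_one]
    exact (int_dvd_iff q z).mp h1
  have k2 : ¬ 2 ≤ (z.natAbs).factorization q := by
    rw [← hq.pow_dvd_iff_le_factorization hz']
    intro h
    exact h2 ((int_pow_dvd_iff q 2 z).mpr h)
  omega

/-- main valuation lemma when q² | Δ: v_q(U_s) = v_q(s) -/
lemma valGL (q : ℕ) (hq : q.Prime) (hq2 : q ≠ 2) :
    ∀ s : ℕ, ∀ P : ℤ, 3 ≤ P → ((q:ℤ))^2 ∣ P^2-4 →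
    ((lucasU P s).natAbs).factorization q = s.factorization q := by
  intro s
  induction s using Nat.strong_induction_on with
  | _ s ih =>
  intro P hP hΔ
  have hqΔ : (q:ℤ) ∣ P^2 - 4 := dvd_trans (dvd_pow_self _ two_ne_zero) hΔ
  rcases Nat.eq_zero_or_pos s with rfl|hs
  · simp
  by_cases hqs : q ∣ s
  · obtain ⟨t, rfl⟩ := hqs
    have ht0 : t ≠ 0 := by rintro rfl; simp at hs
    have hq1 : 1 ≤ q := hq.one_lt.le.trans' (by omega)
    have hUq1 := val_Uq_one_of_sq q hq hq2 P hΔ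
    have hUqne : (lucasU P q).natAbs ≠ 0 := U_natAbs_ne P hP q (by omega) 
    have hWne : (lucasU (lucasV P q) t).natAbs ≠ 0 :=
      U_natAbs_ne (lucasV P q) (V_ge_three P hP q (by omega)) t (by omega)
    rw [i6 P q t, Int.natAbs_mul, Nat.factorization_mul hUqne hWne]
    have hrec : ((lucasU (lucasV P q) t).natAbs).factorization q = t.factorization q := by
      have hlt : t < q * t := by
        have h2t : 2*t ≤ q*t := Nat.mul_le_mul_right t hq.two_le
        omega
      apply ih t hlt (lucasV P q)
        (V_ge_three P hP q (by omega))
      · have h1 := i1 P q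
        have : (lucasV P q)^2 - 4 = (P^2-4) * (lucasU P q)^2 := by linarith
        rw [this]
        exact dvd_mul_of_dvd_left hΔ _
    have hfq : ((lucasU P q).natAbs).factorization q = 1 := by
      apply fact_one_of q hq _ _ hUq1.1 hUq1.2
      have := U_pos_nat P hP q (by omega)
      omega
    rw [Nat.factorization_mul (hq.ne_zero) ht0]
    simp only [Finsupp.coe_add, Pi.add_apply]
    rw [hrec, hfq, hq.factorization_self]
  · have hU : ¬ q ∣ (lucasU P s).natAbs := by
      intro h
      exact q_not_dvd_U q hq hq2 P hqΔ s hs hqs ((int_dvd_iff q _).mpr h)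
    rw [Nat.factorization_eq_zero_of_not_dvd hU, Nat.factorization_eq_zero_of_not_dvd hqs]

/-- LTE: q | U_k ⇒ v_q(U_{k t}) = v_q(U_k) + v_q(t) -/
lemma LTE (q : ℕ) (hq : q.Prime) (hq2 : q ≠ 2) (P : ℤ) (hP : 3 ≤ P)
    (k : ℕ) (hk : 1 ≤ k) (hqU : (q:ℤ) ∣ lucasU P k) (t : ℕ) (ht : t ≠ 0) :
    ((lucasU P (k*t)).natAbs).factorization q
      = ((lucasU P k).natAbs).factorization q + t.factorization q := by
  have hUqne : (lucasU P k).natAbs ≠ 0 := U_natAbs_ne P hP k hk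
  have hV3 : 3 ≤ lucasV P k := V_ge_three P hP k hk
  have hWne : (lucasU (lucasV P k) t).natAbs ≠ 0 :=
    U_natAbs_ne (lucasV P k) hV3 t (by omega)
  rw [i6 P k t, Int.natAbs_mul, Nat.factorization_mul hUqne hWne]
  simp only [Finsupp.coe_add, Pi.add_apply]
  congr 1
  apply valGL q hq hq2 t (lucasV P k) hV3
  have h1 := i1 P k
  have : (lucasV P k)^2 - 4 = (P^2-4) * (lucasU P k)^2 := by linarith
  rw [this]
  obtain ⟨c, hc⟩ := hqU
  exact ⟨(P^2-4)*c^2, by rw [hc]; ring⟩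

end Valuation


section Valuation2

lemma val_Uq_one_five (q : ℕ) (hq : q.Prime) (hq5 : 5 ≤ q) (P : ℤ)
    (hqΔ : (q:ℤ) ∣ P^2-4) :
    (q:ℤ) ∣ lucasU P q ∧ ¬ ((q:ℤ))^2 ∣ lucasU P q := by
  have hq2 : q ≠ 2 := by omega
  obtain ⟨j, hj⟩ : ∃ j, q = j + 3 := ⟨q-3, by omega⟩
  obtain ⟨t, ht⟩ := CONG2 P j
  have hjq : ((j:ℤ)+3) = (q:ℤ) := by rw [hj]; push_cast; ring
  have hC : (q:ℤ) ∣ ((((j+3).choose 3 : ℕ)) : ℤ) := by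
    rw [← hj]
    have : q ∣ q.choose 3 := hq.dvd_choose_self (by norm_num) (by omega)
    exact_mod_cast this
  constructor
  · have h2 : (q:ℤ) ∣ 2^(j+2) * lucasU P (j+3) := by
      rw [ht, hjq]
      refine dvd_add (dvd_add (Dvd.intro _ rfl) ?_) ?_
      · exact dvd_mul_of_dvd_left (dvd_mul_of_dvd_left hC _) _
      · exact dvd_mul_of_dvd_left (dvd_pow hqΔ two_ne_zero) _
    rw [← hj] at h2
    rcases Int.Prime.dvd_mul' hq h2 with h|h
    · exfalso
      have h2' : q ∣ 2 := by
        have := Int.Prime.dvd_pow' hq h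
        exact_mod_cast this
      exact hq2 ((Nat.prime_dvd_prime_iff_eq hq Nat.prime_two).mp h2')
    · exact h
  · intro hsq
    have h2 : ((q:ℤ))^2 ∣ 2^(j+2) * lucasU P (j+3) := by
      rw [← hj]; exact hsq.mul_left _
    rw [ht, hjq] at h2
    have h3 : ((q:ℤ))^2 ∣ ((((j+3).choose 3 : ℕ)) : ℤ) * P^j * (P^2-4) := by
      obtain ⟨c, hc⟩ := hC
      obtain ⟨d, hd⟩ := hqΔ
      exact ⟨c * P^j * d, by rw [hc, hd]; ring⟩
    have h5 : ((q:ℤ))^2 ∣ (P^2-4)^2 * t := (pow_dvd_pow_of_dvd hqΔ 2).mul_right t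
    have h4 : ((q:ℤ))^2 ∣ (q:ℤ) * P^(j+2) := by
      have hsub := dvd_sub (dvd_sub h2 h3) h5
      have e : (q:ℤ) * P ^ (j + 2) + ((((j+3).choose 3 : ℕ)) : ℤ) * P ^ j * (P ^ 2 - 4) + (P ^ 2 - 4) ^ 2 * t -
          ((((j+3).choose 3 : ℕ)) : ℤ) * P ^ j * (P ^ 2 - 4) - (P ^ 2 - 4) ^ 2 * t = (q:ℤ) * P^(j+2) := by ring
      rwa [e] at hsub
    have h6 : (q:ℤ) ∣ P^(j+2) := by
      have hq0 : (q:ℤ) ≠ 0 := by exact_mod_cast hq.ne_zero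
      rcases h4 with ⟨c, hc⟩
      refine ⟨c, ?_⟩
      have : (q:ℤ) * P^(j+2) = (q:ℤ) * ((q:ℤ)*c) := by rw [hc]; ring
      exact mul_left_cancel₀ hq0 this
    exact q_not_dvd_P q hq hq2 P hqΔ (Int.Prime.dvd_pow' hq h6)

lemma val_U_pow_five (q : ℕ) (hq : q.Prime) (hq5 : 5 ≤ q) (P : ℤ) (hP : 3 ≤ P)
    (hqΔ : (q:ℤ) ∣ P^2-4) :
    ∀ f : ℕ, 1 ≤ f → ((lucasU P (q^f)).natAbs).factorization q = f := by
  intro f hf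
  induction f, hf using Nat.le_induction with
  | base =>
    rw [pow_one]
    obtain ⟨h1, h2⟩ := val_Uq_one_five q hq hq5 P hqΔ
    apply fact_one_of q hq _ _ h1 h2
    have := U_pos_nat P hP q (by have := hq.one_lt; omega)
    omega
  | succ f hf ih =>
    have hne : (lucasU P (q^f)).natAbs ≠ 0 :=
      U_natAbs_ne P hP _ (Nat.one_le_iff_ne_zero.mpr (pow_ne_zero _ hq.ne_zero))
    have hqf : (q:ℤ) ∣ lucasU P (q^f) := by
      rw [int_dvd_iff]
      have h1 : (1:ℕ) ≤ ((lucasU P (q^f)).natAbs).factorization q := by omega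
      rw [← hq.pow_dvd_iff_le_factorization hne] at h1
      simpa using h1
    have hL := LTE q hq (by omega) P hP (q^f)
      (Nat.one_le_iff_ne_zero.mpr (pow_ne_zero f hq.ne_zero)) hqf q hq.ne_zero
    rw [← pow_succ] at hL
    rw [hL, ih, hq.factorization_self]

lemma val_U_eq_five (q : ℕ) (hq : q.Prime) (hq5 : 5 ≤ q) (P : ℤ) (hP : 3 ≤ P)
    (hqΔ : (q:ℤ) ∣ P^2-4) (m : ℕ) (hm : 1 ≤ m) :
    ((lucasU P m).natAbs).factorization q = m.factorization q := by
  have hq2 : q ≠ 2 := by omega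
  rcases Nat.eq_zero_or_pos (m.factorization q) with h0|h1
  · rw [h0]
    apply Nat.factorization_eq_zero_of_not_dvd
    intro h
    have hU : (q:ℤ) ∣ lucasU P m := (int_dvd_iff q _).mpr h
    have hdvd := q_dvd_index q hq hq2 P hqΔ m hm hU
    have h1' : 1 ≤ m.factorization q := by
      rw [← hq.pow_dvd_iff_le_factorization (by omega), pow_one]
      exact hdvd
    omega
  · have hm0 : m ≠ 0 := by omega
    have hdecomp : q ^ m.factorization q * ordCompl[q] m = m :=
      Nat.ordProj_mul_ordCompl_eq_self m q
    have hsne : ordCompl[q] m ≠ 0 := by have := Nat.ordCompl_pos q hm0; omega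
    have hqs : ¬ q ∣ ordCompl[q] m := Nat.not_dvd_ordCompl hq hm0
    have hvf := val_U_pow_five q hq hq5 P hP hqΔ (m.factorization q) h1
    have hne : (lucasU P (q ^ m.factorization q)).natAbs ≠ 0 :=
      U_natAbs_ne P hP _ (Nat.one_le_iff_ne_zero.mpr (pow_ne_zero _ hq.ne_zero))
    have hqfU : (q:ℤ) ∣ lucasU P (q ^ m.factorization q) := by
      rw [int_dvd_iff]
      have h1' : (1:ℕ) ≤ ((lucasU P (q ^ m.factorization q)).natAbs).factorization q := by omega
      rw [← hq.pow_dvd_iff_le_factorization hne] at h1'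
      simpa using h1'
    have hLTE := LTE q hq hq2 P hP (q ^ m.factorization q)
      (Nat.one_le_iff_ne_zero.mpr (pow_ne_zero _ hq.ne_zero)) hqfU (ordCompl[q] m) hsne
    rw [hdecomp] at hLTE
    rw [hLTE, hvf, Nat.factorization_eq_zero_of_not_dvd hqs]
    omega

lemma three_dvd_U3 (P : ℤ) (h3Δ : (3:ℤ) ∣ P^2-4) : (3:ℤ) ∣ lucasU P 3 := by
  obtain ⟨t, ht⟩ := CONG P 2
  have he : (((2:ℕ):ℤ)+1) = 3 := by norm_num
  rw [he] at ht
  have h2 : ((3:ℕ):ℤ) ∣ 2^2 * lucasU P 3 := by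
    rw [ht]
    push_cast
    exact dvd_add (Dvd.intro _ rfl) (h3Δ.mul_right t)
  rcases Int.Prime.dvd_mul' Nat.prime_three h2 with h|h
  · exfalso
    have h2' : (3:ℕ) ∣ 2 := by
      have := Int.Prime.dvd_pow' Nat.prime_three h
      exact_mod_cast this
    omega
  · exact_mod_cast h

lemma three_dvd_U_pow (P : ℤ) (hP : 3 ≤ P) (h3Δ : (3:ℤ) ∣ P^2-4) (f : ℕ) (hf : 1 ≤ f) :
    (3:ℤ) ∣ lucasU P (3^f) := by
  have h3 := three_dvd_U3 P h3Δ
  have : lucasU P 3 ∣ lucasU P (3^f) := by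
    obtain ⟨g, rfl⟩ : ∃ g, f = g + 1 := ⟨f-1, by omega⟩
    have : (3:ℕ)^(g+1) = 3 * 3^g := by ring
    rw [this, i6 P 3 (3^g)]
    exact Dvd.intro _ rfl
  exact h3.trans this

lemma val_U_pow_three (P : ℤ) (hP : 3 ≤ P) (h3Δ : (3:ℤ) ∣ P^2-4) :
    ∀ f : ℕ, 1 ≤ f → ((lucasU P (3^f)).natAbs).factorization 3
      = ((lucasU P 3).natAbs).factorization 3 + (f - 1) := by
  intro f hf
  induction f, hf using Nat.le_induction with
  | base => simp
  | succ f hf ih =>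
    have hqf : ((3:ℕ):ℤ) ∣ lucasU P (3^f) := by
      push_cast
      exact three_dvd_U_pow P hP h3Δ f hf
    have hL := LTE 3 Nat.prime_three (by omega) P hP (3^f)
      (Nat.one_le_iff_ne_zero.mpr (pow_ne_zero f (by norm_num))) hqf 3 (by norm_num)
    rw [← pow_succ] at hL
    rw [hL, ih, Nat.prime_three.factorization_self]
    omega

lemma val_U_le_three (P : ℤ) (hP : 3 ≤ P) (h3Δ : (3:ℤ) ∣ P^2-4) (m : ℕ) (hm : 1 ≤ m) :
    ((lucasU P m).natAbs).factorization 3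
      ≤ ((lucasU P 3).natAbs).factorization 3 + m.factorization 3 := by
  rcases Nat.eq_zero_or_pos (m.factorization 3) with h0|h1
  · have h3m : ¬ 3 ∣ m := by
      intro h
      have : 1 ≤ m.factorization 3 := by
        rw [← Nat.prime_three.pow_dvd_iff_le_factorization (by omega), pow_one]
        exact h
      omega
    have hU : ¬ (3:ℕ) ∣ (lucasU P m).natAbs := by
      intro h
      have hU' : ((3:ℕ):ℤ) ∣ lucasU P m := (int_dvd_iff 3 _).mpr h
      exact h3m (q_dvd_index 3 Nat.prime_three (by omega) P (by push_cast at hU' ⊢; exact h3Δ) m hm hU')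
    rw [Nat.factorization_eq_zero_of_not_dvd hU]
    omega
  · have hm0 : m ≠ 0 := by omega
    have hdecomp : 3 ^ m.factorization 3 * ordCompl[3] m = m :=
      Nat.ordProj_mul_ordCompl_eq_self m 3
    have hsne : ordCompl[3] m ≠ 0 := by have := Nat.ordCompl_pos 3 hm0; omega
    have hqs : ¬ 3 ∣ ordCompl[3] m := Nat.not_dvd_ordCompl Nat.prime_three hm0
    have hqfU : ((3:ℕ):ℤ) ∣ lucasU P (3 ^ m.factorization 3) := by
      push_cast
      exact three_dvd_U_pow P hP h3Δ _ h1
    have hLTE := LTE 3 Nat.prime_three (by omega) P hP (3 ^ m.factorization 3)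
      (Nat.one_le_iff_ne_zero.mpr (pow_ne_zero _ (by norm_num))) hqfU (ordCompl[3] m) hsne
    rw [hdecomp] at hLTE
    rw [hLTE, val_U_pow_three P hP h3Δ _ h1, Nat.factorization_eq_zero_of_not_dvd hqs]
    omega

lemma val2_U3s (P : ℤ) (hP : 3 ≤ P) (hPodd : Odd P) (s : ℕ) (hs : Odd s) :
    ((lucasU P (3*s)).natAbs).factorization 2
      = ((lucasU P 3).natAbs).factorization 2 := by
  have hV3even : Even (lucasV P 3) := by
    have h2 : lucasV P 3 = P * (P^2-2) - P := by
      rw [show (3:ℕ) = 1 + 2 by rfl, lucasV_add_two]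
      simp
    rw [h2]
    exact (hPodd.mul (hPodd.pow.sub_even (by norm_num))).sub_odd hPodd
  obtain ⟨i, rfl⟩ : ∃ i, s = 2*i+1 := by
    obtain ⟨i, hi⟩ := hs
    exact ⟨i, by omega⟩
  have hWodd : Odd (lucasU (lucasV P 3) (2*i+1)) := W_odd_of_even _ hV3even i
  have hWne : (lucasU (lucasV P 3) (2*i+1)).natAbs ≠ 0 := by
    obtain ⟨c, hc⟩ := hWodd
    simp only [ne_eq, Int.natAbs_eq_zero]
    omega
  have hU3ne : (lucasU P 3).natAbs ≠ 0 := U_natAbs_ne P hP 3 (by omega)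
  rw [i6 P 3 (2*i+1), Int.natAbs_mul, Nat.factorization_mul hU3ne hWne]
  simp only [Finsupp.coe_add, Pi.add_apply]
  have : ¬ (2:ℕ) ∣ (lucasU (lucasV P 3) (2*i+1)).natAbs := by
    intro h
    have h2 : ((2:ℕ):ℤ) ∣ lucasU (lucasV P 3) (2*i+1) := (int_dvd_iff 2 _).mpr h
    obtain ⟨c, hc⟩ := hWodd
    obtain ⟨d, hd⟩ := h2
    push_cast at hd
    omega
  rw [Nat.factorization_eq_zero_of_not_dvd this]
  omega

lemma dvd_of_forall_prime_val_le (a b : ℕ) (ha : a ≠ 0) (hb : b ≠ 0)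
    (h : ∀ q : ℕ, q.Prime → a.factorization q ≤ b.factorization q) : a ∣ b := by
  rw [← Nat.factorization_le_iff_dvd ha hb]
  intro q
  by_cases hq : q.Prime
  · exact h q hq
  · simp [Nat.factorization_eq_zero_of_not_prime _ hq]

end Valuation2


section Descent

open Real

lemma sqrtD_irr (D : ℤ) (hD : 0 < D) (hns : ¬ IsSquare D) :
    Irrational (Real.sqrt (D:ℝ)) := by
  have := (irrational_sqrt_intCast_iff_of_nonneg hD.le).mpr hns
  simpa using this

lemma extract (D : ℤ) (hirr : Irrational (Real.sqrt (D:ℝ))) (a b c d : ℤ)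
    (h : (a:ℝ) + (b:ℝ) * Real.sqrt (D:ℝ) = (c:ℝ) + (d:ℝ) * Real.sqrt (D:ℝ)) :
    a = c ∧ b = d := by
  by_cases hbd : b = d
  · subst hbd
    have : (a:ℝ) = c := by linarith
    exact ⟨by exact_mod_cast this, rfl⟩
  · exfalso
    have hbd' : ((b:ℝ)) - d ≠ 0 := by
      intro hh
      apply hbd
      have : (b:ℝ) = d := by linarith
      exact_mod_cast this
    have hval : Real.sqrt (D:ℝ) = ((c - a : ℤ):ℝ) / ((b - d : ℤ):ℝ) := by
      push_cast
      field_simp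
      linarith
    apply hirr
    refine ⟨((c - a : ℚ)) / ((b - d : ℚ)), ?_⟩
    rw [hval]
    push_cast
    ring
  
lemma rep (D : ℤ) (hD : 0 < D) (x₁ y₁ : ℤ) (hsol₁ : x₁^2 - D*y₁^2 = 4) :
    ∀ j : ℕ, ((lucasV x₁ j : ℝ) + (y₁ : ℝ) * (lucasU x₁ j : ℝ) * Real.sqrt (D:ℝ))/2
      = (((x₁:ℝ) + (y₁:ℝ) * Real.sqrt (D:ℝ))/2)^j := by
  have hs2 : Real.sqrt (D:ℝ)^2 = (D:ℝ) := Real.sq_sqrt (by positivity)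
  intro j
  induction j with
  | zero => norm_num
  | succ n ih =>
    rw [pow_succ, ← ih]
    have h0a := i0a x₁ n
    have h0b := i0b x₁ n
    have h0a' : (x₁:ℝ) * (lucasV x₁ n : ℝ) + ((x₁:ℝ)^2-4) * (lucasU x₁ n : ℝ)
        = 2 * (lucasV x₁ (n+1) : ℝ) := by exact_mod_cast h0a
    have h0b' : (lucasV x₁ n : ℝ) + (x₁:ℝ) * (lucasU x₁ n : ℝ)
        = 2 * (lucasU x₁ (n+1) : ℝ) := by exact_mod_cast h0b
    have hΔ : ((x₁:ℝ))^2 - 4 = (D:ℝ) * (y₁:ℝ)^2 := by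
      have : x₁^2 - 4 = D*y₁^2 := by linarith
      exact_mod_cast this
    set s := Real.sqrt (D:ℝ) with hs
    linear_combination (-1/4) * h0a' - ((y₁:ℝ) * s / 4) * h0b'
      - ((y₁:ℝ)^2 * (lucasU x₁ n : ℝ) / 4) * hs2 + ((lucasU x₁ n : ℝ)/4) * hΔ

lemma parity_eq (D x y : ℤ) (hDodd : Odd D) (hsol : x^2 - D*y^2 = 4) :
    (Even x ∧ Even y) ∨ (Odd x ∧ Odd y) := by
  rcases Int.even_or_odd x with hx|hx <;> rcases Int.even_or_odd y with hy|hy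
  · exact Or.inl ⟨hx, hy⟩
  · exfalso
    have hx2 : Even (x^2) := by rw [sq]; exact hx.mul_right x
    have h1 : Odd (D*y^2) := hDodd.mul hy.pow
    have h2 : Odd (x^2 - D*y^2) := hx2.sub_odd h1
    rw [hsol] at h2
    obtain ⟨c, hc⟩ := h2
    omega
  · exfalso
    have hy2 : Even (y^2) := by rw [sq]; exact hy.mul_right y
    have h1 : Even (D*y^2) := hy2.mul_left D
    have h2 : Odd (x^2 - D*y^2) := (hx.pow).sub_even h1
    rw [hsol] at h2
    obtain ⟨c, hc⟩ := h2
    omega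
  · exact Or.inr ⟨hx, hy⟩

end Descent


section DescentMain

set_option maxHeartbeats 2000000 in
lemma descent (D : ℤ) (hD : 0 < D) (hns : ¬IsSquare D) (hDodd : Odd D)
    (x₁ y₁ : ℤ) (hx₁ : 0 < x₁) (hy₁ : 0 < y₁) (hsol₁ : x₁^2 - D*y₁^2 = 4)
    (hmin : ∀ u v : ℤ, 0 < u → 0 < v → u^2 - D*v^2 = 4 →
      (x₁:ℝ) + (y₁:ℝ) * Real.sqrt (D:ℝ) ≤ (u:ℝ) + (v:ℝ) * Real.sqrt (D:ℝ)) :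
    ∀ n : ℕ, ∀ x y : ℤ, 0 < x → 0 < y → x^2 - D*y^2 = 4 → y.toNat ≤ n →
      ∃ m : ℕ, 1 ≤ m ∧ x = lucasV x₁ m ∧ y = y₁ * lucasU x₁ m := by
  have hirr := sqrtD_irr D hD hns
  have hD2 : 2 ≤ D := by
    by_contra h
    have hD1 : D = 1 := by omega
    exact hns ⟨1, by omega⟩
  have hx₁3 : 3 ≤ x₁ := by nlinarith
  set s : ℝ := Real.sqrt (D:ℝ) with hsdef
  have hs2 : s^2 = (D:ℝ) := Real.sq_sqrt (by positivity)
  have hs0 : 0 < s := Real.sqrt_pos.mpr (by positivity)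
  have hDR : (2:ℝ) ≤ (D:ℝ) := by exact_mod_cast hD2
  have hs1 : 1 < s := by nlinarith
  intro n
  induction n with
  | zero => intro x y hx hy _ hle; omega
  | succ n ih =>
    intro x y hx hy hsol hle
    by_cases hcase : x = x₁ ∧ y = y₁
    · refine ⟨1, le_refl 1, ?_, ?_⟩
      · simp [hcase.1]
      · simp [hcase.2]
    · have hpar := parity_eq D x y hDodd hsol
      have hpar₁ := parity_eq D x₁ y₁ hDodd hsol₁
      have hevx' : Even (x*x₁ - D*y*y₁) := by
        rcases hpar with ⟨hx', hy'⟩|⟨hx', hy'⟩ <;> rcases hpar₁ with ⟨hx₁', hy₁'⟩|⟨hx₁', hy₁'⟩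
        · exact (hx'.mul_right x₁).sub ((hy'.mul_left D).mul_right y₁)
        · exact (hx'.mul_right x₁).sub ((hy'.mul_left D).mul_right y₁)
        · exact (hx₁'.mul_left x).sub (hy₁'.mul_left (D*y))
        · exact (hx'.mul hx₁').sub_odd ((hDodd.mul hy').mul hy₁')
      have hevy' : Even (x₁*y - x*y₁) := by
        rcases hpar with ⟨hx', hy'⟩|⟨hx', hy'⟩ <;> rcases hpar₁ with ⟨hx₁', hy₁'⟩|⟨hx₁', hy₁'⟩
        · exact (hy'.mul_left x₁).sub (hx'.mul_right y₁)
        · exact (hy'.mul_left x₁).sub (hx'.mul_right y₁)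
        · exact (hx₁'.mul_right y).sub (hy₁'.mul_left x)
        · exact (hx₁'.mul hy').sub_odd (hx'.mul hy₁')
      obtain ⟨x', hx'e⟩ := hevx'
      obtain ⟨y', hy'e⟩ := hevy'
      have h4 : 4*x'^2 - 4*(D*y'^2) = 16 := by
        linear_combination (-(x*x₁ - D*y*y₁ + 2*x')) * hx'e + D*(x₁*y - x*y₁ + 2*y') * hy'e
          + (x₁^2 - D*y₁^2) * hsol + 4 * hsol₁
      have hsol' : x'^2 - D*y'^2 = 4 := by linarith
      have hsolR : (x:ℝ)^2 - (D:ℝ)*(y:ℝ)^2 = 4 := by exact_mod_cast hsol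
      have hsolR₁ : (x₁:ℝ)^2 - (D:ℝ)*(y₁:ℝ)^2 = 4 := by exact_mod_cast hsol₁
      have hsolR' : (x':ℝ)^2 - (D:ℝ)*(y':ℝ)^2 = 4 := by exact_mod_cast hsol'
      have hx'eR : (x:ℝ)*(x₁:ℝ) - (D:ℝ)*(y:ℝ)*(y₁:ℝ) = (x':ℝ) + (x':ℝ) := by exact_mod_cast hx'e
      have hy'eR : (x₁:ℝ)*(y:ℝ) - (x:ℝ)*(y₁:ℝ) = (y':ℝ) + (y':ℝ) := by exact_mod_cast hy'e
      obtain ⟨α, hα⟩ : ∃ a : ℝ, a = ((x:ℝ) + (y:ℝ)*s)/2 := ⟨_, rfl⟩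
      obtain ⟨αb, hαb⟩ : ∃ a : ℝ, a = ((x:ℝ) - (y:ℝ)*s)/2 := ⟨_, rfl⟩
      obtain ⟨ε, hε⟩ : ∃ a : ℝ, a = ((x₁:ℝ) + (y₁:ℝ)*s)/2 := ⟨_, rfl⟩
      obtain ⟨εb, hεb⟩ : ∃ a : ℝ, a = ((x₁:ℝ) - (y₁:ℝ)*s)/2 := ⟨_, rfl⟩
      obtain ⟨α', hα'⟩ : ∃ a : ℝ, a = ((x':ℝ) + (y':ℝ)*s)/2 := ⟨_, rfl⟩
      have hnormα : α * αb = 1 := by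
        rw [hα, hαb]
        linear_combination (1/4)*hsolR - ((y:ℝ)^2/4)*hs2
      have hnormε : ε * εb = 1 := by
        rw [hε, hεb]
        linear_combination (1/4)*hsolR₁ - ((y₁:ℝ)^2/4)*hs2
      have hα'eq : α' = α * εb := by
        rw [hα', hα, hεb]
        linear_combination (-1/4)*hx'eR - (s/4)*hy'eR + ((y:ℝ)*(y₁:ℝ)/4)*hs2
      have hx₁R : (3:ℝ) ≤ (x₁:ℝ) := by exact_mod_cast hx₁3
      have hy₁R : (1:ℝ) ≤ (y₁:ℝ) := by exact_mod_cast hy₁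
      have hε1 : 1 < ε := by rw [hε]; nlinarith
      have hεle : ε ≤ α := by
        have hm := hmin x y hx hy hsol
        rw [hε, hα]
        linarith
      have hεlt : ε < α := by
        rcases lt_or_eq_of_le hεle with h|h
        · exact h
        · exfalso
          apply hcase
          have hXY : (x:ℝ) + (y:ℝ)*s = (x₁:ℝ) + (y₁:ℝ)*s := by
            rw [hε, hα] at h
            linarith
          exact extract D hirr x y x₁ y₁ hXY
      have hα0 : 0 < α := by linarith
      have hεb0 : 0 < εb := by
        by_contra h
        push_neg at h
        nlinarith [mul_nonpos_of_nonneg_of_nonpos (show (0:ℝ) ≤ ε by linarith) h]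
      have hεbv : εb = 1/ε := eq_one_div_of_mul_eq_one_left (by rw [mul_comm]; exact hnormε)
      have hαbv : αb = 1/α := eq_one_div_of_mul_eq_one_left (by rw [mul_comm]; exact hnormα)
      have hα'1 : 1 < α' := by
        have hgt : 0 < εb*(α-ε) := mul_pos hεb0 (sub_pos.mpr hεlt)
        have hexp : α*εb = 1 + εb*(α-ε) := by linear_combination hnormε
        rw [hα'eq, hexp]
        linarith
      have hα'0 : 0 < α' := by linarith
      obtain ⟨αb', hαb'⟩ : ∃ a : ℝ, a = ((x':ℝ) - (y':ℝ)*s)/2 := ⟨_, rfl⟩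
      have hnormα' : α' * αb' = 1 := by
        rw [hα', hαb']
        linear_combination (1/4)*hsolR' - ((y':ℝ)^2/4)*hs2
      have hαb'v : αb' = 1/α' := eq_one_div_of_mul_eq_one_left (by rw [mul_comm]; exact hnormα')
      have hαb'pos : 0 < αb' := by rw [hαb'v]; positivity
      have hαb'lt1 : αb' < 1 := by
        by_contra h
        push_neg at h
        have h2 := mul_le_mul_of_nonneg_left h (le_of_lt hα'0)
        rw [mul_one, hnormα'] at h2
        linarith
      have hx'R : (x':ℝ) = α' + αb' := by rw [hα', hαb']; ring
      have hy'R : (y':ℝ)*s = α' - αb' := by rw [hα', hαb']; ring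
      have hx'pos : 0 < x' := by
        have h1 : (0:ℝ) < (x':ℝ) := by rw [hx'R]; linarith
        exact_mod_cast h1
      have hy'pos : 0 < y' := by
        have h1 : (0:ℝ) < (y':ℝ)*s := by rw [hy'R]; linarith
        have h2 : (0:ℝ) < (y':ℝ) := by
          by_contra hcon
          push_neg at hcon
          have h3 : (y':ℝ)*s ≤ 0 := mul_nonpos_iff.mpr (Or.inr ⟨hcon, hs0.le⟩)
          linarith
        exact_mod_cast h2
      have hεb1 : εb < 1 := by
        by_contra h
        push_neg at h
        have h2 := mul_le_mul_of_nonneg_left h (show (0:ℝ) ≤ ε by linarith)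
        rw [mul_one, hnormε] at h2
        linarith
      have hα'ltα : α' < α := by
        have hgt : 0 < α*(1-εb) := mul_pos hα0 (sub_pos.mpr hεb1)
        have hexp : α*εb = α - α*(1-εb) := by ring
        rw [hα'eq, hexp]
        linarith
      have hy'lty : y' < y := by
        have hyR : (y:ℝ)*s = α - αb := by rw [hα, hαb]; ring
        have h1α : 1/α < 1/α' := one_div_lt_one_div_of_lt hα'0 hα'ltα
        have hkey : α' - αb' < α - αb := by
          rw [hαbv, hαb'v]
          linarith
        have h1 : (y':ℝ)*s < (y:ℝ)*s := by rw [hy'R, hyR]; linarith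
        have h2 : (y':ℝ) < (y:ℝ) := by
          by_contra hcon
          push_neg at hcon
          have h3 := mul_le_mul_of_nonneg_right hcon hs0.le
          linarith
        exact_mod_cast h2
      obtain ⟨m', hm'1, hx'', hy''⟩ := ih x' y' hx'pos hy'pos hsol' (by omega)
      have hrep' := rep D hD x₁ y₁ hsol₁ m'
      have hrepm := rep D hD x₁ y₁ hsol₁ (m'+1)
      have hαeq : α = α' * ε := by
        rw [hα'eq]
        linear_combination (-α) * hnormε
      have hα'rep : α' = (((x₁:ℝ) + (y₁:ℝ)*s)/2)^m' := by
        rw [← hrep', hα', hx'', hy'']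
        push_cast
        ring
      have hαrep : α = (((x₁:ℝ) + (y₁:ℝ)*s)/2)^(m'+1) := by
        rw [hαeq, hα'rep, hε, pow_succ]
      have hXY : (x:ℝ) + (y:ℝ)*s
          = ((lucasV x₁ (m'+1) : ℤ):ℝ) + ((y₁ * lucasU x₁ (m'+1) : ℤ):ℝ)*s := by
        have h2 : ((x:ℝ) + (y:ℝ)*s)/2
            = ((lucasV x₁ (m'+1):ℝ) + (y₁:ℝ)*(lucasU x₁ (m'+1):ℝ)*s)/2 := by
          rw [← hα, hαrep, hrepm]
        push_cast
        push_cast at h2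
        linarith
      have hfin := extract D hirr x y (lucasV x₁ (m'+1)) (y₁ * lucasU x₁ (m'+1)) hXY
      exact ⟨m'+1, by omega, hfin.1, hfin.2⟩

end DescentMain



section Branches

lemma fact_le_of_dvd (a b : ℕ) (ha : a ≠ 0) (hb : b ≠ 0) (h : a ∣ b) (q : ℕ) :
    a.factorization q ≤ b.factorization q := by
  have h2 := (Nat.factorization_le_iff_dvd ha hb).mpr h
  exact h2 q

lemma two_pow_gt (t : ℕ) (ht : 6 ≤ t) : ((t:ℤ)+3) < 2^t := by
  induction t, ht using Nat.le_induction with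
  | base => norm_num
  | succ n hn ih =>
    have h2 : (2:ℤ)^(n+1) = 2*2^n := by ring
    push_cast
    push_cast at ih
    rw [h2]
    linarith

lemma prime_ge_five (q : ℕ) (hq : q.Prime) (h2 : q ≠ 2) (h3 : q ≠ 3) : 5 ≤ q := by
  have hq2 := hq.two_le
  have h4 : q ≠ 4 := by
    intro h
    rw [h] at hq
    norm_num at hq
  omega

lemma not_two_dvd_odd (z : ℤ) (hz : Odd z) : ¬ (2:ℤ) ∣ z := by
  obtain ⟨c, hc⟩ := hz
  rintro ⟨d, hd⟩
  omega

lemma dvd_four_prime (r : ℕ) (hr : r.Prime) (h : (r:ℤ) ∣ 4) : r = 2 := by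
  have h44 : r ∣ 4 := by
    rw [show (4:ℤ) = ((4:ℕ):ℤ) by norm_num] at h
    exact_mod_cast h
  have := hr.dvd_of_dvd_pow (show r ∣ 2^2 by norm_num; exact h44)
  exact (Nat.prime_dvd_prime_iff_eq hr Nat.prime_two).mp this

lemma branch_even (D : ℤ) (hD2 : 2 ≤ D) (hDodd : Odd D)
    (x₁ y₁ : ℤ) (hx₁3 : (3:ℤ) ≤ x₁) (hx₁odd : Odd x₁) (hΔ : x₁^2 - 4 = D*y₁^2)
    (p : ℕ) (hp : p.Prime) (k : ℕ) (hk2 : 2 ≤ k)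
    (hclass : ∀ q : ℕ, q.Prime → (q:ℤ) ∣ lucasU x₁ (2*k) → (q = p ∨ (q:ℤ) ∣ D)) :
    False := by
  have hP3 := hx₁3
  have hUm := U_two_mul x₁ k
  have hVk3 : 3 ≤ lucasV x₁ k := V_ge_three x₁ hP3 k (by omega)
  have hUk1 : 1 ≤ lucasU x₁ k := U_pos_nat x₁ hP3 k (by omega)
  have hD2' : ¬ (2:ℤ) ∣ D := not_two_dvd_odd D hDodd
  have hVdvd : lucasV x₁ k ∣ lucasU x₁ (2*k) := by rw [hUm]; exact dvd_mul_left _ _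
  have hUdvd : lucasU x₁ k ∣ lucasU x₁ (2*k) := by rw [hUm]; exact dvd_mul_right _ _
  have hVclass : ∀ r : ℕ, r.Prime → (r:ℤ) ∣ lucasV x₁ k → r = p := by
    intro r hr hrV
    rcases hclass r hr (hrV.trans hVdvd) with h|h
    · exact h
    · exfalso
      have hrΔ : (r:ℤ) ∣ x₁^2-4 := by rw [hΔ]; exact h.mul_right _
      have hi1 := i1 x₁ k
      have hr4 : (r:ℤ) ∣ 4 := by
        have he : (4:ℤ) = lucasV x₁ k^2 - (x₁^2-4)*lucasU x₁ k^2 := hi1.symm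
        rw [he]
        exact dvd_sub (dvd_pow hrV two_ne_zero) (hrΔ.mul_right _)
      have hr2 := dvd_four_prime r hr hr4
      rw [hr2] at h
      exact hD2' (by exact_mod_cast h)
  have hVne1 : (lucasV x₁ k).natAbs ≠ 1 := by omega
  obtain ⟨r, hr, hrV⟩ := Nat.exists_prime_and_dvd hVne1
  have hrV' : (r:ℤ) ∣ lucasV x₁ k := (int_dvd_iff r _).mpr hrV
  have hpV : (p:ℤ) ∣ lucasV x₁ k := by
    have := hVclass r hr hrV'
    rw [← this]
    exact hrV'
  by_cases hp2 : p = 2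
  · subst hp2
    have hVk2 : (lucasV x₁ k).natAbs = 2 ^ ((lucasV x₁ k).natAbs).primeFactorsList.length := by
      apply Nat.eq_prime_pow_of_unique_prime_dvd (by omega)
      intro d hd hdvd
      exact hVclass d hd ((int_dvd_iff d _).mpr hdvd)
    set c := ((lucasV x₁ k).natAbs).primeFactorsList.length with hcdef
    have hVval : lucasV x₁ k = 2^c := by
      have h0 : ((lucasV x₁ k).natAbs : ℤ) = lucasV x₁ k := Int.natAbs_of_nonneg (by linarith)
      rw [← h0, hVk2]
      push_cast
      ring
    rcases Nat.even_or_odd k with ⟨j, hj⟩|⟨j, hj⟩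
    · have hkj : k = 2*j := by omega
      have hj1 : 1 ≤ j := by omega
      have hVj3 : 3 ≤ lucasV x₁ j := V_ge_three x₁ hP3 j hj1
      have hV2 := V_two_mul x₁ j
      rw [hkj, hV2] at hVval
      rcases Nat.lt_or_ge c 2 with hc2|hc2
      · interval_cases c <;> nlinarith [hVval, hVj3]
      · have he : (2:ℤ)^c = 4 * 2^(c-2) := by
          have h := pow_add (2:ℤ) 2 (c-2)
          rw [show 2+(c-2) = c by omega] at h
          rw [h]
          norm_num
        rw [he] at hVval
        obtain ⟨e, hee⟩ : ∃ e : ℤ, (2:ℤ)^(c-2) = e := ⟨_, rfl⟩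
        rw [hee] at hVval
        rcases Int.even_or_odd (lucasV x₁ j) with ⟨t, ht⟩|⟨t, ht⟩
        · rw [ht] at hVval
          obtain ⟨w, hw⟩ : ∃ w : ℤ, t*t = w := ⟨_, rfl⟩
          have key : 4*w - 2 = 4*e := by
            have h2 : (t+t)^2 = 4*(t*t) := by ring
            rw [h2, hw] at hVval
            linarith
          omega
        · rw [ht] at hVval
          obtain ⟨w, hw⟩ : ∃ w : ℤ, t*t+t = w := ⟨_, rfl⟩
          have key : 4*w - 1 = 4*e := by
            have h2 : (2*t+1)^2 - 2 = 4*(t*t+t) - 1 := by ring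
            rw [h2, hw] at hVval
            linarith
          omega
    · have hkj : k = 2*j+1 := by omega
      have hdvdV := P_dvd_V_odd x₁ j
      rw [← hkj] at hdvdV
      rw [hVval] at hdvdV
      have hna : x₁.natAbs ∣ 2^c := by
        have h2 := Int.natAbs_dvd_natAbs.mpr hdvdV
        have h3 : ((2:ℤ)^c).natAbs = 2^c := by
          rw [Int.natAbs_pow]
          norm_num
        rwa [h3] at h2
      have hodd' : Odd x₁.natAbs := Int.natAbs_odd.mpr hx₁odd
      have hco : (x₁.natAbs).Coprime 2 := Nat.coprime_two_right.mpr hodd'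
      have h1 := (hco.pow_right c).eq_one_of_dvd hna
      omega
  · have h2Um : ¬ (2:ℤ) ∣ lucasU x₁ (2*k) := by
      intro h2
      rcases hclass 2 Nat.prime_two (by exact_mod_cast h2) with h|h
      · exact hp2 h.symm
      · exact hD2' (by exact_mod_cast h)
    have h3k : ¬ 3 ∣ k := by
      intro h3
      apply h2Um
      rw [two_dvd_U_iff x₁ hx₁odd]
      omega
    have hUknat : (lucasU x₁ k).natAbs ∣ k := by
      apply dvd_of_forall_prime_val_le _ _ (by omega) (by omega)
      intro q hq
      by_cases hqU : q ∣ (lucasU x₁ k).natAbs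
      · have hqU' : (q:ℤ) ∣ lucasU x₁ k := (int_dvd_iff q _).mpr hqU
        have hqUm : (q:ℤ) ∣ lucasU x₁ (2*k) := hqU'.trans hUdvd
        have hq2 : q ≠ 2 := by
          rintro rfl
          exact h2Um hqUm
        have hqD : (q:ℤ) ∣ D := by
          rcases hclass q hq hqUm with h|h
          · exfalso
            subst h
            have hi1 := i1 x₁ k
            have h4 : (q:ℤ) ∣ 4 := by
              have he : (4:ℤ) = lucasV x₁ k^2 - (x₁^2-4)*lucasU x₁ k^2 := hi1.symm
              rw [he]
              exact dvd_sub (dvd_pow hpV two_ne_zero)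
                (dvd_mul_of_dvd_right (dvd_pow hqU' two_ne_zero) _)
            exact hq2 (dvd_four_prime q hq h4)
          · exact h
        have hqΔ : (q:ℤ) ∣ x₁^2-4 := by rw [hΔ]; exact hqD.mul_right _
        have hq3 : q ≠ 3 := by
          rintro rfl
          exact h3k (q_dvd_index 3 hq (by omega) x₁ hqΔ k (by omega) hqU')
        have hq5 := prime_ge_five q hq hq2 hq3
        rw [val_U_eq_five q hq hq5 x₁ hP3 hqΔ k (by omega)]
      · rw [Nat.factorization_eq_zero_of_not_dvd hqU]
        omega
    have hle : (lucasU x₁ k).natAbs ≤ k := Nat.le_of_dvd (by omega) hUknat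
    have hG := G1 x₁ hP3 k hk2
    omega

lemma branch_odd (D : ℤ) (hD2 : 2 ≤ D) (hDodd : Odd D)
    (x₁ y₁ : ℤ) (hx₁3 : (3:ℤ) ≤ x₁) (hx₁odd : Odd x₁) (hΔ : x₁^2 - 4 = D*y₁^2)
    (p : ℕ) (hp : p.Prime) (k : ℕ) (hk2 : 2 ≤ k)
    (hclass : ∀ q : ℕ, q.Prime → (q:ℤ) ∣ lucasU x₁ (2*k+1) → (q = p ∨ (q:ℤ) ∣ D))
    (hp2dvd : p = 2 → (2:ℤ) ∣ lucasU x₁ (2*k+1)) :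
    x₁ = 3 ∧ k = 2 := by
  have hP3 := hx₁3
  have hD2' : ¬ (2:ℤ) ∣ D := not_two_dvd_odd D hDodd
  have hUm1 : 1 ≤ lucasU x₁ (2*k+1) := U_pos_nat x₁ hP3 _ (by omega)
  by_cases hp2 : p = 2
  · exfalso
    have h2Um := hp2dvd hp2
    have h3m : 3 ∣ 2*k+1 := (two_dvd_U_iff x₁ hx₁odd (2*k+1)).mp h2Um
    have hm9 : 9 ≤ 2*k+1 := by omega
    obtain ⟨sod, hsod⟩ := h3m
    have hsodd : Odd sod := by
      rcases Nat.even_or_odd sod with ⟨i, hi⟩|h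
      · omega
      · exact h
    have hUmne : (lucasU x₁ (2*k+1)).natAbs ≠ 0 := by omega
    have hU31 : 1 ≤ lucasU x₁ 3 := U_pos_nat x₁ hP3 3 (by omega)
    have hU3ne : (lucasU x₁ 3).natAbs ≠ 0 := by omega
    have hdvd : (lucasU x₁ (2*k+1)).natAbs ∣ (lucasU x₁ 3).natAbs * (2*k+1) := by
      apply dvd_of_forall_prime_val_le _ _ hUmne (by positivity)
      intro q hq
      rw [Nat.factorization_mul hU3ne (by omega)]
      simp only [Finsupp.coe_add, Pi.add_apply]
      by_cases hqU : q ∣ (lucasU x₁ (2*k+1)).natAbs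
      · have hqU' : (q:ℤ) ∣ lucasU x₁ (2*k+1) := (int_dvd_iff q _).mpr hqU
        by_cases hq2 : q = 2
        · subst hq2
          have hv2 := val2_U3s x₁ hP3 hx₁odd sod hsodd
          rw [← hsod] at hv2
          rw [hv2]
          omega
        · have hqD : (q:ℤ) ∣ D := by
            rcases hclass q hq hqU' with h|h
            · exact absurd (h.trans hp2) hq2
            · exact h
          have hqΔ : (q:ℤ) ∣ x₁^2-4 := by rw [hΔ]; exact hqD.mul_right _
          by_cases hq3 : q = 3
          · subst hq3
            have := val_U_le_three x₁ hP3 hqΔ (2*k+1) (by omega)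
            omega
          · have hq5 := prime_ge_five q hq hq2 hq3
            rw [val_U_eq_five q hq hq5 x₁ hP3 hqΔ (2*k+1) (by omega)]
            omega
      · rw [Nat.factorization_eq_zero_of_not_dvd hqU]
        omega
    have hled : lucasU x₁ (2*k+1) ≤ lucasU x₁ 3 * (2*k+1 : ℤ) := by
      have h1 : (lucasU x₁ (2*k+1)).natAbs ≤ (lucasU x₁ 3).natAbs * (2*k+1) :=
        Nat.le_of_dvd (by positivity) hdvd
      have e1 : ((lucasU x₁ (2*k+1)).natAbs : ℤ) = lucasU x₁ (2*k+1) :=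
        Int.natAbs_of_nonneg (by linarith)
      have e2 : ((lucasU x₁ 3).natAbs : ℤ) = lucasU x₁ 3 :=
        Int.natAbs_of_nonneg (by linarith)
      have h2 : (((lucasU x₁ (2*k+1)).natAbs : ℤ)) ≤ ((lucasU x₁ 3).natAbs : ℤ) * ((2*k+1 : ℕ) : ℤ) := by
        exact_mod_cast h1
      rw [e1, e2] at h2
      push_cast at h2
      push_cast
      linarith
    have hUpow := Upow x₁ hP3 (2*k+1-3) 2
    rw [show 2+1+(2*k+1-3) = 2*k+1 by omega] at hUpow
    have hpow : 2*(k:ℤ)+1 < (x₁-1)^(2*k+1-3) := by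
      have h2t := two_pow_gt (2*k+1-3) (by omega)
      have h2le : (2:ℤ)^(2*k+1-3) ≤ (x₁-1)^(2*k+1-3) :=
        pow_le_pow_left₀ (by norm_num) (by linarith) _
      have hcast : ((2*k+1-3 : ℕ):ℤ) = 2*(k:ℤ) - 2 := by omega
      rw [hcast] at h2t
      linarith
    have hU3pos : (0:ℤ) < lucasU x₁ 3 := by linarith
    have hcmp : lucasU x₁ 3 * (2*(k:ℤ)+1) < lucasU x₁ 3 * (x₁-1)^(2*k+1-3) :=
      mul_lt_mul_of_pos_left hpow hU3pos
    have hcomm : lucasU x₁ 3 * (x₁-1)^(2*k+1-3) = (x₁-1)^(2*k+1-3) * lucasU x₁ 3 :=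
      mul_comm _ _
    linarith
  · have hpodd := hp.odd_of_ne_two hp2
    have h2Um : ¬ (2:ℤ) ∣ lucasU x₁ (2*k+1) := by
      intro h2
      rcases hclass 2 Nat.prime_two (by exact_mod_cast h2) with h|h
      · exact hp2 h.symm
      · exact hD2' (by exact_mod_cast h)
    have h3m : ¬ 3 ∣ 2*k+1 := by
      intro h3
      exact h2Um ((two_dvd_U_iff x₁ hx₁odd (2*k+1)).mpr h3)
    obtain ⟨j, hj⟩ : ∃ j, k = j+1 := ⟨k-1, by omega⟩
    have hABid : (lucasU x₁ (k+1) - lucasU x₁ k)^2*(x₁+2)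
        - (lucasU x₁ (k+1) + lucasU x₁ k)^2*(x₁-2) = 4 := by
      rw [hj, show j+1+1 = j+2 by omega]
      linear_combination (4*lucasU x₁ (j+2)) * (lucasU_add_two x₁ j) - 4*(i5 x₁ j)
    have hABU : (lucasU x₁ (k+1) + lucasU x₁ k) * (lucasU x₁ (k+1) - lucasU x₁ k)
        = lucasU x₁ (2*k+1) := by
      rw [i4 x₁ k]
      ring
    have hmono := (U_pos_mono x₁ hP3 k)
    have hApos : 0 < lucasU x₁ (k+1) + lucasU x₁ k := by
      have := U_pos_nat x₁ hP3 k (by omega)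
      linarith
    have hBpos : 0 < lucasU x₁ (k+1) - lucasU x₁ k := by linarith [hmono.2]
    have hAdvd : (lucasU x₁ (k+1) + lucasU x₁ k) ∣ lucasU x₁ (2*k+1) := ⟨_, hABU.symm⟩
    have hBdvd : (lucasU x₁ (k+1) - lucasU x₁ k) ∣ lucasU x₁ (2*k+1) :=
      ⟨lucasU x₁ (k+1) + lucasU x₁ k, by rw [← hABU]; ring⟩
    have hCdvd : ∀ C : ℤ, 0 < C → C ∣ lucasU x₁ (2*k+1) → ¬(p:ℤ) ∣ C →
        C ≤ 2*(k:ℤ)+1 := by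
      intro C hCpos hCU hpC
      have hCnat : C.natAbs ∣ 2*k+1 := by
        apply dvd_of_forall_prime_val_le _ _ (by omega) (by omega)
        intro q hq
        by_cases hqC : q ∣ C.natAbs
        · have hqC' : (q:ℤ) ∣ C := (int_dvd_iff q _).mpr hqC
          have hqU : (q:ℤ) ∣ lucasU x₁ (2*k+1) := hqC'.trans hCU
          have hq2 : q ≠ 2 := by
            rintro rfl
            exact h2Um hqU
          have hqp : q ≠ p := by
            rintro rfl
            exact hpC hqC'
          have hqD : (q:ℤ) ∣ D := by
            rcases hclass q hq hqU with h|h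
            · exact absurd h hqp
            · exact h
          have hqΔ : (q:ℤ) ∣ x₁^2-4 := by rw [hΔ]; exact hqD.mul_right _
          have hq3 : q ≠ 3 := by
            rintro rfl
            exact h3m (q_dvd_index 3 hq (by omega) x₁ hqΔ (2*k+1) (by omega) hqU)
          have hq5 := prime_ge_five q hq hq2 hq3
          have hvle := fact_le_of_dvd C.natAbs (lucasU x₁ (2*k+1)).natAbs
            (by omega) (by omega) (Int.natAbs_dvd_natAbs.mpr hCU) q
          have hveq := val_U_eq_five q hq hq5 x₁ hP3 hqΔ (2*k+1) (by omega)
          omega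
        · rw [Nat.factorization_eq_zero_of_not_dvd hqC]
          omega
      have h1 : C.natAbs ≤ 2*k+1 := Nat.le_of_dvd (by omega) hCnat
      omega
    by_cases hpB : (p:ℤ) ∣ (lucasU x₁ (k+1) - lucasU x₁ k)
    · exfalso
      have hpA : ¬(p:ℤ) ∣ (lucasU x₁ (k+1) + lucasU x₁ k) := by
        intro hpA
        have hp4 : (p:ℤ) ∣ 4 := by
          rw [← hABid]
          exact dvd_sub ((dvd_pow hpB two_ne_zero).mul_right _)
            ((dvd_pow hpA two_ne_zero).mul_right _)
        exact hp2 (dvd_four_prime p hp hp4)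
      have hAle := hCdvd _ hApos hAdvd hpA
      have hG := G2 x₁ hP3 k hk2
      linarith
    · have hBle := hCdvd _ hBpos hBdvd hpB
      have hG := G3 x₁ hP3 k hk2 (by linarith)
      exact ⟨hG.2, hG.1⟩

end Branches

end StormerAux

open StormerAux in
set_option maxHeartbeats 1000000 in
/-- Extension of Störmer's theorem for `x² - D y² = 4` (solvable in odd
positive integers): a positive solution with `y = pⁿ y'`, `p` a prime not
dividing `D`, and every prime divisor of `y'` dividing `D`, satisfies
`(x + y√D)/2 = (ε/2)^m` with `m ∈ {1, 2, 3}`, except for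
`(x, y, D) = (123, 55, 5)`. -/
theorem stormer_four_one_prime (D : ℤ) (hD : 0 < D) (hns : ¬ IsSquare D)
    (hodd : ∃ u v : ℤ, 0 < u ∧ 0 < v ∧ Odd u ∧ Odd v ∧ u ^ 2 - D * v ^ 2 = 4)
    (x₁ y₁ : ℤ) (hx₁ : 0 < x₁) (hy₁ : 0 < y₁)
    (hsol₁ : x₁ ^ 2 - D * y₁ ^ 2 = 4)
    (hmin : ∀ u v : ℤ, 0 < u → 0 < v → u ^ 2 - D * v ^ 2 = 4 →
      (x₁ : ℝ) + (y₁ : ℝ) * Real.sqrt (D : ℝ) ≤ (u : ℝ) + (v : ℝ) * Real.sqrt (D : ℝ))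
    (x y : ℤ) (hx : 0 < x) (hy : 0 < y)
    (hsol : x ^ 2 - D * y ^ 2 = 4)
    (p : ℕ) (hp : p.Prime) (hpD : ¬ (p : ℤ) ∣ D)
    (n : ℕ) (hn : 0 < n) (y' : ℤ) (hyy : y = (p : ℤ) ^ n * y')
    (hdiv : ∀ q : ℕ, q.Prime → (q : ℤ) ∣ y' → (q : ℤ) ∣ D)
    (hexc : ¬ (x = 123 ∧ y = 55 ∧ D = 5)) :
    ∃ m : ℕ, (m = 1 ∨ m = 2 ∨ m = 3) ∧
      ((x : ℝ) + (y : ℝ) * Real.sqrt (D : ℝ)) / 2 =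
        (((x₁ : ℝ) + (y₁ : ℝ) * Real.sqrt (D : ℝ)) / 2) ^ m := by
  obtain ⟨u, v, hu, hv, huo, hvo, huv⟩ := hodd
  have hDodd : Odd D := by
    rcases Int.even_or_odd D with hDe|hDo
    · exfalso
      have h1 : Even (D*v^2) := hDe.mul_right _
      have h2 : Odd (u^2) := huo.pow
      have h3 : Odd (u^2 - D*v^2) := h2.sub_even h1
      rw [huv] at h3
      obtain ⟨c, hc⟩ := h3
      omega
    · exact hDo
  have hD2 : 2 ≤ D := by
    by_contra h
    exact hns ⟨1, by omega⟩
  have hdesc := descent D hD hns hDodd x₁ y₁ hx₁ hy₁ hsol₁ hmin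
  have hy₁odd : Odd y₁ := by
    rcases parity_eq D x₁ y₁ hDodd hsol₁ with ⟨he1, he2⟩|⟨_, h⟩
    · exfalso
      obtain ⟨mv, _, _, hmv3⟩ := hdesc v.toNat u v hu hv huv (le_refl _)
      have hev : Even v := by rw [hmv3]; exact he2.mul_right _
      obtain ⟨c, hc⟩ := hev
      obtain ⟨d, hd⟩ := hvo
      omega
    · exact h
  have hx₁odd : Odd x₁ := by
    rcases parity_eq D x₁ y₁ hDodd hsol₁ with ⟨he1, he2⟩|⟨h, _⟩
    · exfalso
      obtain ⟨c, hc⟩ := he2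
      obtain ⟨d, hd⟩ := hy₁odd
      omega
    · exact h
  have hx₁3 : (3:ℤ) ≤ x₁ := by nlinarith
  have hΔ : x₁^2 - 4 = D*y₁^2 := by linarith
  obtain ⟨m, hm1, hxV, hyU⟩ := hdesc y.toNat x y hx hy hsol (le_refl _)
  have hrep := rep D hD x₁ y₁ hsol₁ m
  rcases le_or_gt m 3 with hm3|hm4
  · refine ⟨m, by omega, ?_⟩
    rw [hxV, hyU]
    push_cast
    linear_combination hrep
  · exfalso
    have hUdvdy : lucasU x₁ m ∣ y := by rw [hyU]; exact dvd_mul_left _ _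
    have hclassU : ∀ q : ℕ, q.Prime → (q:ℤ) ∣ lucasU x₁ m → (q = p ∨ (q:ℤ) ∣ D) := by
      intro q hq hqU
      have hqy : (q:ℤ) ∣ y := hqU.trans hUdvdy
      rw [hyy] at hqy
      rcases Int.Prime.dvd_mul' hq hqy with h|h
      · left
        have h2 : (q:ℤ) ∣ (p:ℤ) := Int.Prime.dvd_pow' hq h
        have h3 : q ∣ p := by exact_mod_cast h2
        exact (Nat.prime_dvd_prime_iff_eq hq hp).mp h3
      · right
        exact hdiv q hq h
    rcases Nat.even_or_odd m with ⟨k, hk⟩|⟨k, hk⟩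
    · have hk' : m = 2*k := by omega
      rw [hk'] at hclassU
      exact branch_even D hD2 hDodd x₁ y₁ hx₁3 hx₁odd hΔ p hp k (by omega) hclassU
    · have hk' : m = 2*k+1 := by omega
      have hk2 : 2 ≤ k := by omega
      rw [hk'] at hclassU hyU hxV
      have h2dvd : p = 2 → (2:ℤ) ∣ lucasU x₁ (2*k+1) := by
        intro hp2
        subst hp2
        have h2y : (2:ℤ) ∣ y := by
          rw [hyy]
          have : ((2:ℕ):ℤ) ∣ ((2:ℕ):ℤ)^n := dvd_pow_self _ (by omega)
          exact dvd_mul_of_dvd_left (by exact_mod_cast this) _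
        rw [hyU] at h2y
        have h2y' : ((2:ℕ):ℤ) ∣ y₁ * lucasU x₁ (2*k+1) := by exact_mod_cast h2y
        rcases Int.Prime.dvd_mul' Nat.prime_two h2y' with h|h
        · exact absurd (by exact_mod_cast h) (not_two_dvd_odd y₁ hy₁odd)
        · exact_mod_cast h
      obtain ⟨hx13, hk2'⟩ := branch_odd D hD2 hDodd x₁ y₁ hx₁3 hx₁odd hΔ p hp k hk2
        hclassU h2dvd
      rw [hx13] at hΔ
      have hy₁1 : y₁ = 1 := by
        have h5 : D * y₁^2 = 5 := by linarith
        by_contra hne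
        have h2 : 2 ≤ y₁ := by omega
        nlinarith
      have hD5 : D = 5 := by
        rw [hy₁1] at hΔ
        linarith
      have hU5 : lucasU (3:ℤ) 5 = 55 := by
        have e2 : lucasU (3:ℤ) 2 = 3 := by simp
        have e3 : lucasU (3:ℤ) 3 = 8 := by
          rw [show (3:ℕ) = 1+2 by rfl, lucasU_add_two]
          simp
        have e4 : lucasU (3:ℤ) 4 = 21 := by
          rw [show (4:ℕ) = 2+2 by rfl, lucasU_add_two, e3]
          norm_num
        rw [show (5:ℕ) = 3+2 by rfl, lucasU_add_two]
        rw [e4, e3]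
        norm_num
      have hV5 : lucasV (3:ℤ) 5 = 123 := by
        have e2 : lucasV (3:ℤ) 2 = 7 := by
          rw [lucasV_two]
          norm_num
        have e3 : lucasV (3:ℤ) 3 = 18 := by
          rw [show (3:ℕ) = 1+2 by rfl, lucasV_add_two, e2]
          norm_num
        have e4 : lucasV (3:ℤ) 4 = 47 := by
          rw [show (4:ℕ) = 2+2 by rfl, lucasV_add_two, e3, e2]
          norm_num
        rw [show (5:ℕ) = 3+2 by rfl, lucasV_add_two, e4, e3]
        norm_num
      apply hexc
      refine ⟨?_, ?_, hD5⟩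
      · rw [hxV, hx13, hk2']
        rw [show 2*2+1 = 5 by rfl]
        exact hV5
      · rw [hyU, hx13, hk2', hy₁1]
        rw [show 2*2+1 = 5 by rfl, hU5]
        norm_num
end
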